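/- arXiv:1307.6929 — 12 statements merged into one kernel-verified Lean document; each statement's English description precedes it below -/
import Mathlib

section
/- Let S be a finitely generated semigroup, let φ be a semigroup endomorphism of S, and let T be a proper subsemigroup of S such that the complement S \ T is finite. Then the image φ(T) is not equal to S. -/
/-- For every endomorphism `φ` of a finitely generated semigroup `S` and every proper
cofinite subsemigroup `T`, the image `φ(T)` is not all of `S`. -/
theorem stmt_1 {S : Type*} [Semigroup S]
    (hfg : ∃ A : Finset S, Subsemigroup.closure (A : Set S) = ⊤)
    (φ : S →ₙ* S) (T : Subsemigroup S) (hproper : T ≠ ⊤)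
    (hfin : ((T : Set S)ᶜ).Finite) :
    φ '' (T : Set S) ≠ Set.univ := by
  classical
  obtain ⟨A, hA⟩ := hfg
  intro hsurj
  set F : Set S := (T : Set S)ᶜ with hFdef
  haveI : Fintype ↥F := hfin.fintype
  have memF : ∀ {s : S}, s ∉ T → s ∈ F := fun {s} h => h
  have memT : ∀ {s : S}, s ∉ F → s ∈ T := fun {s} h => by
    by_contra h'; exact h h'
  -- `sim a b` : `a` and `b` are both in `T`, or they are equal.
  set sim : S → S → Prop := fun a b => (a ∈ T ∧ b ∈ T) ∨ a = b with hsim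
  -- the "pointed syntactic congruence" of `T`
  set r : S → S → Prop := fun x y =>
    sim x y ∧ (∀ u, sim (u * x) (u * y)) ∧ (∀ v, sim (x * v) (y * v)) ∧
      ∀ u v, sim (u * x * v) (u * y * v) with hr
  have sim_refl : ∀ a, sim a a := fun a => Or.inr rfl
  have sim_symm : ∀ {a b}, sim a b → sim b a := fun {a b} h =>
    h.imp (fun h' => ⟨h'.2, h'.1⟩) Eq.symm
  have sim_trans : ∀ {a b c}, sim a b → sim b c → sim a c := by
    rintro a b c (⟨ha, hb⟩ | rfl) h2
    · rcases h2 with ⟨hb', hc⟩ | rfl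
      · exact Or.inl ⟨ha, hc⟩
      · exact Or.inl ⟨ha, hb⟩
    · exact h2
  have r_symm : ∀ {x y}, r x y → r y x := fun {x y} h =>
    ⟨sim_symm h.1, fun u => sim_symm (h.2.1 u), fun v => sim_symm (h.2.2.1 v),
      fun u v => sim_symm (h.2.2.2 u v)⟩
  have r_trans : ∀ {x y z}, r x y → r y z → r x z := fun {x y z} h h' =>
    ⟨sim_trans h.1 h'.1, fun u => sim_trans (h.2.1 u) (h'.2.1 u),
      fun v => sim_trans (h.2.2.1 v) (h'.2.2.1 v),
      fun u v => sim_trans (h.2.2.2 u v) (h'.2.2.2 u v)⟩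
  have r_refl : ∀ x, r x x := fun x =>
    ⟨sim_refl _, fun _ => sim_refl _, fun _ => sim_refl _, fun _ _ => sim_refl _⟩
  -- r is right- and left-compatible with multiplication
  have r_mul_right : ∀ {x y} (z : S), r x y → r (x * z) (y * z) := by
    intro x y z h
    refine ⟨h.2.2.1 z, fun u => ?_, fun v => ?_, fun u v => ?_⟩
    · have := h.2.2.2 u z
      simpa [mul_assoc] using this
    · have := h.2.2.1 (z * v)
      simpa [mul_assoc] using this
    · have := h.2.2.2 u (z * v)
      simpa [mul_assoc] using this
  have r_mul_left : ∀ {x y} (z : S), r x y → r (z * x) (z * y) := by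
    intro x y z h
    refine ⟨h.2.1 z, fun u => ?_, fun v => ?_, fun u v => ?_⟩
    · have := h.2.1 (u * z)
      simpa [mul_assoc] using this
    · have := h.2.2.2 z v
      simpa [mul_assoc] using this
    · have := h.2.2.2 (u * z) v
      simpa [mul_assoc] using this
  -- the congruence
  set c : Con S :=
    { r := r
      iseqv := ⟨r_refl, r_symm, r_trans⟩
      mul' := fun {w x y z} h h' =>
        r_trans (r_mul_right y h) (r_mul_left x h') } with hc
  -- the finite profile classifying `r`-classes
  set σ : S → Option ↥F := fun s => if h : s ∈ F then some ⟨s, h⟩ else none with hσ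
  set P : S → Option ↥F × (↥F → Option ↥F) × (↥F → Option ↥F) × (↥F → ↥F → Option ↥F) :=
    fun x => (σ x, fun p => σ (p.1 * x), fun q => σ (x * q.1), fun p q => σ (p.1 * x * q.1))
    with hP
  have sim_of_sigma : ∀ {a b : S}, σ a = σ b → sim a b := by
    intro a b h
    by_cases ha : a ∈ F
    · by_cases hb : b ∈ F
      · simp only [hσ, dif_pos ha, dif_pos hb, Option.some.injEq, Subtype.mk.injEq] at h
        exact Or.inr h
      · simp [hσ, dif_pos ha, dif_neg hb] at h
    · by_cases hb : b ∈ F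
      · simp [hσ, dif_neg ha, dif_pos hb] at h
      · exact Or.inl ⟨memT ha, memT hb⟩
  have sigma_of_sim : ∀ {a b : S}, sim a b → σ a = σ b := by
    rintro a b (⟨ha, hb⟩ | rfl)
    · have ha' : a ∉ F := fun h => h ha
      have hb' : b ∉ F := fun h => h hb
      simp [hσ, dif_neg ha', dif_neg hb']
    · rfl
  -- Key finiteness lemma: the profile determines the `r`-class.
  have r_of_P : ∀ {x y : S}, P x = P y → r x y := by
    intro x y h
    simp only [hP, Prod.mk.injEq] at h
    obtain ⟨h0, h1, h2, h3⟩ := h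
    have s0 : sim x y := sim_of_sigma h0
    have s1 : ∀ p : ↥F, sim (p.1 * x) (p.1 * y) := fun p => sim_of_sigma (congrFun h1 p)
    have s2 : ∀ q : ↥F, sim (x * q.1) (y * q.1) := fun q => sim_of_sigma (congrFun h2 q)
    have s3 : ∀ p q : ↥F, sim (p.1 * x * q.1) (p.1 * y * q.1) := fun p q =>
      sim_of_sigma (congrFun (congrFun h3 p) q)
    have c1 : ∀ u, sim (u * x) (u * y) := by
      intro u
      by_cases hu : u ∈ T
      · rcases s0 with ⟨hx, hy⟩ | rfl
        · exact Or.inl ⟨T.mul_mem hu hx, T.mul_mem hu hy⟩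
        · exact Or.inr rfl
      · exact s1 ⟨u, memF hu⟩
    have c2 : ∀ v, sim (x * v) (y * v) := by
      intro v
      by_cases hv : v ∈ T
      · rcases s0 with ⟨hx, hy⟩ | rfl
        · exact Or.inl ⟨T.mul_mem hx hv, T.mul_mem hy hv⟩
        · exact Or.inr rfl
      · exact s2 ⟨v, memF hv⟩
    refine ⟨s0, c1, c2, fun u v => ?_⟩
    by_cases hu : u ∈ T
    · rcases c2 v with ⟨hx, hy⟩ | he
      · exact Or.inl ⟨by rw [mul_assoc]; exact T.mul_mem hu hx,
          by rw [mul_assoc]; exact T.mul_mem hu hy⟩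
      · exact Or.inr (by rw [mul_assoc, he, ← mul_assoc])
    · by_cases hv : v ∈ T
      · rcases c1 u with ⟨hx, hy⟩ | he
        · exact Or.inl ⟨T.mul_mem hx hv, T.mul_mem hy hv⟩
        · exact Or.inr (by rw [he])
      · exact s3 ⟨u, memF hu⟩ ⟨v, memF hv⟩
  have P_of_r : ∀ {x y : S}, r x y → P x = P y := by
    intro x y h
    simp only [hP, Prod.mk.injEq]
    exact ⟨sigma_of_sim h.1, funext fun p => sigma_of_sim (h.2.1 p.1),
      funext fun q => sigma_of_sim (h.2.2.1 q.1),
      funext fun p => funext fun q => sigma_of_sim (h.2.2.2 p.1 q.1)⟩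
  -- the finite quotient semigroup
  have Pbar_sound : ∀ (a b : S), c a b → P a = P b := fun a b h => P_of_r h
  let Pbar : c.Quotient → _ := Quotient.lift P Pbar_sound
  have Pbar_inj : Function.Injective Pbar := by
    intro q1 q2
    induction q1 using Quotient.inductionOn with
    | h x =>
      induction q2 using Quotient.inductionOn with
      | h y =>
        intro h
        exact Quotient.sound (r_of_P h)
  haveI : Finite c.Quotient := Finite.of_injective Pbar Pbar_inj
  -- the quotient hom
  let q₀ : S →ₙ* c.Quotient := ⟨fun x => (x : c.Quotient), fun x y => Con.coe_mul x y⟩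
  -- homs from S to a fixed finite semigroup are finite in number
  have hom_ext : ∀ f g : S →ₙ* c.Quotient, (∀ a ∈ A, f a = g a) → f = g := by
    intro f g hfg'
    have : Subsemigroup.closure (A : Set S) ≤
        { carrier := {s | f s = g s}
          mul_mem' := fun {a b} ha hb => by
            simp only [Set.mem_setOf_eq] at *
            rw [map_mul, map_mul, ha, hb] } := by
      rw [Subsemigroup.closure_le]
      intro a ha
      exact hfg' a ha
    rw [hA] at this
    ext s
    exact this (Subsemigroup.mem_top s)
  haveI : Finite (S →ₙ* c.Quotient) := by
    refine Finite.of_injective (fun f => (fun a : ↥(A : Set S) => f a.1)) ?_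
    intro f g h
    exact hom_ext f g fun a ha => congrFun h ⟨a, ha⟩
  -- iterates of φ
  let Φ : ℕ → (S →ₙ* S) := fun n => n.rec (MulHom.id S) (fun _ ih => ih.comp φ)
  -- the finite family of homs
  let ℱ : Set (S →ₙ* c.Quotient) := Set.range (fun j => q₀.comp (Φ j))
  haveI : Finite ↥ℱ := Subtype.finite
  -- the combined map
  let Ψ : S → (↥ℱ → c.Quotient) := fun x h => h.1 x
  have hΦsucc : ∀ j (x : S), Φ (j + 1) x = Φ j (φ x) := fun j x => rfl
  -- Ψ intertwines φ
  have hdet : ∀ x y, Ψ x = Ψ y → Ψ (φ x) = Ψ (φ y) := by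
    intro x y h
    funext hh
    obtain ⟨j, hj⟩ := hh.2
    have h1 : q₀.comp (Φ (j + 1)) ∈ ℱ := ⟨j + 1, rfl⟩
    have e1 : Ψ (φ x) hh = Ψ x ⟨q₀.comp (Φ (j + 1)), h1⟩ := by
      simp only [Ψ, ← hj]
      rfl
    have e2 : Ψ (φ y) hh = Ψ y ⟨q₀.comp (Φ (j + 1)), h1⟩ := by
      simp only [Ψ, ← hj]
      rfl
    rw [e1, e2, h]
  -- Ψ saturates T
  have hsat : ∀ x t, t ∈ T → Ψ x = Ψ t → x ∈ T := by
    intro x t ht h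
    have h0 : q₀.comp (Φ 0) ∈ ℱ := ⟨0, rfl⟩
    have := congrFun h ⟨q₀.comp (Φ 0), h0⟩
    have hq : q₀ x = q₀ t := this
    have hrxt : c x t := (Con.eq c).mp hq
    have : sim x t := hrxt.1
    rcases this with ⟨hx, _⟩ | rfl
    · exact hx
    · exact ht
  -- T is proper: pick an element outside
  obtain ⟨f0, hf0⟩ : ∃ x, x ∉ T := by
    by_contra h
    push_neg at h
    exact hproper ((Subsemigroup.eq_top_iff' T).mpr h)
  -- counting argument
  set X : Set (↥ℱ → c.Quotient) := Set.range Ψ with hX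
  set Y : Set (↥ℱ → c.Quotient) := Ψ '' (T : Set S) with hY
  have hYX : Y ⊆ X := by
    rintro _ ⟨t, _, rfl⟩
    exact ⟨t, rfl⟩
  have hfXnotY : Ψ f0 ∈ X ∧ Ψ f0 ∉ Y := by
    refine ⟨⟨f0, rfl⟩, ?_⟩
    rintro ⟨t, ht, heq⟩
    exact hf0 (hsat f0 t ht heq.symm)
  have hssub : Y ⊂ X := ⟨hYX, fun hXY => hfXnotY.2 (hXY hfXnotY.1)⟩
  -- the induced map
  set g : (↥ℱ → c.Quotient) → (↥ℱ → c.Quotient) :=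
    fun w => if h : ∃ x, Ψ x = w then Ψ (φ h.choose) else w with hg
  have hgΨ : ∀ t : S, g (Ψ t) = Ψ (φ t) := by
    intro t
    have hex : ∃ x, Ψ x = Ψ t := ⟨t, rfl⟩
    rw [hg]
    simp only [dif_pos hex]
    exact hdet _ _ hex.choose_spec
  have himg : g '' Y = Ψ '' (φ '' (T : Set S)) := by
    rw [hY, Set.image_image, Set.image_image]
    exact Set.image_congr fun t _ => hgΨ t
  have hXeq : X = g '' Y := by
    rw [himg, hsurj]
    ext w
    constructor
    · rintro ⟨x, rfl⟩
      exact ⟨x, Set.mem_univ x, rfl⟩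
    · rintro ⟨x, _, rfl⟩
      exact ⟨x, rfl⟩
  have hXfin : X.Finite := Set.toFinite X
  have hYfin : Y.Finite := Set.toFinite Y
  have : X.ncard < X.ncard := by
    calc X.ncard = (g '' Y).ncard := by rw [hXeq]
    _ ≤ Y.ncard := Set.ncard_image_le hYfin
    _ < X.ncard := Set.ncard_lt_ncard hssub hXfin
  exact lt_irrefl _ this
end

section
/- Let S be a semigroup, let φ be a semigroup endomorphism of S, and let F be a finite subset of S. Then there exists N ≥ 1 such that for every f ∈ F at least one of the following holds: φ^{tN}(f) ∉ F for all t ≥ 1, or φ^N(f) = φ^{2N}(f). -/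
/-- For a semigroup endomorphism `φ` of `S` and a finite subset `F ⊆ S`, there exists
`N ≥ 1` such that for every `f ∈ F`, either `φ^[t*N] f ∉ F` for all `t ≥ 1`, or
`φ^[N] f = φ^[2*N] f`. -/
theorem stmt_2 {S : Type*} [Semigroup S] (φ : S →ₙ* S) (F : Finset S) :
    ∃ N : ℕ, 1 ≤ N ∧ ∀ f ∈ F,
      (∀ t : ℕ, 1 ≤ t → (⇑φ)^[t * N] f ∉ F) ∨ (⇑φ)^[N] f = (⇑φ)^[2 * N] f := by
  classical
  have key : ∀ f : S, ∃ B p : ℕ, 1 ≤ p ∧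
      ((∀ n, B ≤ n → (⇑φ)^[n] f ∉ F) ∨ (∀ n, B ≤ n → (⇑φ)^[n] f = (⇑φ)^[n + p] f)) := by
    intro f
    by_cases h : {n : ℕ | (⇑φ)^[n] f ∈ F}.Infinite
    · obtain ⟨n, hn, m, hm, hnm, heq⟩ :=
        h.exists_ne_map_eq_of_mapsTo (t := (F : Set S)) (f := fun n => (⇑φ)^[n] f)
          (fun n hn => hn) F.finite_toSet
      wlog hlt : n < m generalizing n m
      · exact this m hm n hn hnm.symm heq.symm (by omega)
      refine ⟨n, m - n, by omega, Or.inr fun k hk => ?_⟩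
      have h1 : (⇑φ)^[k] f = (⇑φ)^[k - n] ((⇑φ)^[n] f) := by
        rw [← Function.iterate_add_apply]; congr 1; omega
      have h2 : (⇑φ)^[k + (m - n)] f = (⇑φ)^[k - n] ((⇑φ)^[m] f) := by
        rw [← Function.iterate_add_apply]; congr 1; omega
      rw [h1, h2, heq]
    · rw [Set.not_infinite] at h
      obtain ⟨Bd, hBd⟩ := h.bddAbove
      exact ⟨Bd + 1, 1, le_refl 1, Or.inl fun n hn hnF => by
        have := hBd hnF; omega⟩
  choose B p hp hBp using key
  set P : ℕ := ∏ f ∈ F, p f with hP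
  have hP1 : 1 ≤ P := Finset.one_le_prod' fun f _ => hp f
  set N : ℕ := (F.sup B + 1) * P with hN
  have hN1 : 1 ≤ N := Nat.mul_pos (Nat.succ_pos _) hP1
  refine ⟨N, hN1, fun f hf => ?_⟩
  have hBf : B f ≤ N := by
    calc B f ≤ F.sup B := Finset.le_sup hf
    _ ≤ F.sup B + 1 := by omega
    _ ≤ (F.sup B + 1) * P := Nat.le_mul_of_pos_right _ hP1
  rcases hBp f with h | h
  · left
    intro t ht hmem
    exact h (t * N) (le_trans hBf (Nat.le_mul_of_pos_left N (by omega))) hmem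
  · right
    have hdvd : p f ∣ N := Dvd.dvd.mul_left (Finset.dvd_prod_of_mem p hf) _
    obtain ⟨c, hc⟩ := hdvd
    have step : ∀ k n, B f ≤ n → (⇑φ)^[n] f = (⇑φ)^[n + k * p f] f := by
      intro k
      induction k with
      | zero => intro n hn; simp
      | succ k ih =>
        intro n hn
        rw [ih n hn, h (n + k * p f) (by omega)]
        congr 1; ring
    have hstep := step c N hBf
    rw [two_mul, hstep]
    congr 1
    rw [mul_comm] at hc
    omega
end

section
/- Let S be a semigroup, let T be a subsemigroup of S, let π be a semigroup endomorphism of S, and set F = S \ T, U = {f ∈ F : π(f) = f}, and V = T ∩ (U² ∪ U³), where U² and U³ denote the sets of products of two, respectively three, elements of U. Then F ∩ ⟨U⟩ = U and T ∩ ⟨U⟩ = ⟨V⟩, where ⟨X⟩ denotes the subsemigroup of S generated by the set X (interpreted as the empty set when X is empty). -/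
open Pointwise

private lemma foldl_mul_aux {S : Type*} [Semigroup S] (z c : S) :
    ∀ l : List S, List.foldl (· * ·) (z * c) l = z * List.foldl (· * ·) c l
  | [] => rfl
  | d :: l => by
    show List.foldl (· * ·) ((z * c) * d) l = z * List.foldl (· * ·) (c * d) l
    rw [mul_assoc]; exact foldl_mul_aux z (c * d) l

private lemma fix_foldl_aux {S : Type*} [Semigroup S] (π : S →ₙ* S) :
    ∀ (l : List S) (a : S), π a = a → (∀ y ∈ l, π y = y) →
      π (List.foldl (· * ·) a l) = List.foldl (· * ·) a l
  | [], a, ha, _ => ha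
  | b :: l, a, ha, hl =>
    fix_foldl_aux π l (a * b)
      (by rw [map_mul, ha, hl b (List.mem_cons_self ..)])
      (fun y hy => hl y (List.mem_cons_of_mem _ hy))

private lemma key_aux {S : Type*} [Semigroup S] (T : Subsemigroup S) (π : S →ₙ* S)
    (U V : Set S)
    (hU : ∀ x, x ∈ U ↔ x ∉ (T : Set S) ∧ π x = x)
    (hV : V = (T : Set S) ∩ (U * U ∪ U * U * U)) :
    ∀ (l : List S) (a : S), a ∈ U → (∀ y ∈ l, y ∈ U) →
      List.foldl (· * ·) a l ∈ (T : Set S) →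
      List.foldl (· * ·) a l ∈ Subsemigroup.closure V
  | [], a, ha, _, hx => absurd hx ((hU a).1 ha).1
  | [b], a, ha, hl, hx =>
    Subsemigroup.subset_closure (by
      rw [hV]
      exact ⟨hx, Or.inl (Set.mul_mem_mul ha (hl b (List.mem_cons_self ..)))⟩)
  | b :: c :: l, a, ha, hl, hx => by
    have hb : b ∈ U := hl b (List.mem_cons_self ..)
    have hc : c ∈ U := hl c (List.mem_cons_of_mem _ (List.mem_cons_self ..))
    have hl' : ∀ y ∈ l, y ∈ U :=
      fun y hy => hl y (List.mem_cons_of_mem _ (List.mem_cons_of_mem _ hy))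
    by_cases hab : a * b ∈ (T : Set S)
    · -- x = (a*b) * r with r = foldl c l
      set r := List.foldl (· * ·) c l with hr
      have hxr : List.foldl (· * ·) a (b :: c :: l) = (a * b) * r := by
        show List.foldl (· * ·) (a * b) (c :: l) = (a * b) * r
        show List.foldl (· * ·) ((a * b) * c) l = (a * b) * r
        rw [foldl_mul_aux]
      rw [hxr] at hx ⊢
      by_cases hrT : r ∈ (T : Set S)
      · have hrV : r ∈ Subsemigroup.closure V := key_aux T π U V hU hV l c hc hl' hrT
        have habV : a * b ∈ Subsemigroup.closure V := Subsemigroup.subset_closure (by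
          rw [hV]; exact ⟨hab, Or.inl (Set.mul_mem_mul ha hb)⟩)
        exact mul_mem habV hrV
      · have hrfix : π r = r :=
          fix_foldl_aux π l c ((hU c).1 hc).2 (fun y hy => ((hU y).1 (hl' y hy)).2)
        have hrU : r ∈ U := (hU r).2 ⟨hrT, hrfix⟩
        exact Subsemigroup.subset_closure (by
          rw [hV]
          exact ⟨hx, Or.inr (Set.mul_mem_mul (Set.mul_mem_mul ha hb) hrU)⟩)
    · have habU : a * b ∈ U := (hU (a * b)).2 ⟨hab,
        by rw [map_mul, ((hU a).1 ha).2, ((hU b).1 hb).2]⟩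
      show List.foldl (· * ·) (a * b) (c :: l) ∈ Subsemigroup.closure V
      exact key_aux T π U V hU hV (c :: l) (a * b) habU
        (fun y hy => hl y (List.mem_cons_of_mem _ hy)) hx
  termination_by l => l.length

/-- With `F = S \ T`, `U = {f ∈ F : π f = f}` and `V = T ∩ (U² ∪ U³)`, we have
`F ∩ ⟨U⟩ = U` and `T ∩ ⟨U⟩ = ⟨V⟩`. -/
theorem stmt_3 {S : Type*} [Semigroup S] (T : Subsemigroup S) (π : S →ₙ* S)
    (F U V : Set S)
    (hF : F = (T : Set S)ᶜ)
    (hU : U = {f ∈ F | π f = f})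
    (hV : V = (T : Set S) ∩ (U * U ∪ U * U * U)) :
    F ∩ (Subsemigroup.closure U : Set S) = U ∧
    (T : Set S) ∩ (Subsemigroup.closure U : Set S) = (Subsemigroup.closure V : Set S) := by
  have hU' : ∀ x, x ∈ U ↔ x ∉ (T : Set S) ∧ π x = x := by
    intro x
    rw [hU, hF]
    exact Iff.rfl
  have hfix : ∀ x ∈ Subsemigroup.closure U, π x = x := by
    intro x hx
    induction hx using Subsemigroup.closure_induction with
    | mem y hy => exact ((hU' y).1 hy).2
    | mul a b _ _ ha hb => rw [map_mul, ha, hb]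
  constructor
  · apply Set.Subset.antisymm
    · rintro x ⟨hxF, hxcl⟩
      exact (hU' x).2 ⟨by rwa [hF, Set.mem_compl_iff] at hxF, hfix x hxcl⟩
    · intro x hx
      exact ⟨(hU ▸ hx : x ∈ {f ∈ F | π f = f}).1, Subsemigroup.subset_closure hx⟩
  · apply Set.Subset.antisymm
    · have hrep : ∀ x, x ∈ Subsemigroup.closure U →
          ∃ (a : S) (l : List S), a ∈ U ∧ (∀ y ∈ l, y ∈ U) ∧
          x = List.foldl (· * ·) a l := by
        intro x hxcl
        induction hxcl using Subsemigroup.closure_induction with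
        | mem y hy => exact ⟨y, [], hy, by simp, rfl⟩
        | mul a b _ _ ha hb =>
          obtain ⟨a₀, la, ha₀, hla, rfl⟩ := ha
          obtain ⟨b₀, lb, hb₀, hlb, rfl⟩ := hb
          refine ⟨a₀, la ++ b₀ :: lb, ha₀, ?_, ?_⟩
          · intro y hy
            rcases List.mem_append.1 hy with h | h
            · exact hla y h
            · rcases List.mem_cons.1 h with h | h
              · exact h ▸ hb₀
              · exact hlb y h
          · rw [List.foldl_append]
            show _ = List.foldl (· * ·) (List.foldl (· * ·) a₀ la * b₀) lb
            rw [foldl_mul_aux]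
      rintro x ⟨hxT, hxcl⟩
      obtain ⟨a, l, ha, hl, rfl⟩ := hrep x hxcl
      exact key_aux T π U V hU' hV l a ha hl hxT
    · intro x hx
      have : Subsemigroup.closure V ≤ T ⊓ Subsemigroup.closure U := by
        apply Subsemigroup.closure_le.2
        intro v hv
        rw [hV] at hv
        obtain ⟨hvT, hvU⟩ := hv
        refine ⟨hvT, ?_⟩
        rcases hvU with h | h
        · obtain ⟨u₁, hu₁, u₂, hu₂, rfl⟩ := h
          exact mul_mem (Subsemigroup.subset_closure hu₁) (Subsemigroup.subset_closure hu₂)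
        · obtain ⟨w, hw, u₃, hu₃, rfl⟩ := h
          obtain ⟨u₁, hu₁, u₂, hu₂, rfl⟩ := hw
          exact mul_mem (mul_mem (Subsemigroup.subset_closure hu₁)
            (Subsemigroup.subset_closure hu₂)) (Subsemigroup.subset_closure hu₃)
      exact this hx
end

section
/- Let S be a finitely generated semigroup, let T be a subsemigroup of S with S \ T finite, let π be a semigroup endomorphism of S with π(T) = S, and let B = {t ∈ T : π^k(t) ∈ T for all k ≥ 0}. Assume that for every f ∈ S \ T either π(f) ∈ B, or π²(f) = π(f) and π(f) ∈ S \ T. Then there exists a finite set Y ⊆ B such that Y ∪ (S \ T) generates S. -/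
private def iterHom {S : Type*} [Semigroup S] (π : S →ₙ* S) : ℕ → (S →ₙ* S)
  | 0 => MulHom.id S
  | n + 1 => π.comp (iterHom π n)

private lemma iterHom_coe {S : Type*} [Semigroup S] (π : S →ₙ* S) (n : ℕ) :
    ⇑(iterHom π n) = (⇑π)^[n] := by
  induction n with
  | zero => rfl
  | succ n ih =>
    funext x
    simp [iterHom, ih, Function.iterate_succ_apply']

/-- Let `S` be a finitely generated semigroup, `T` a cofinite subsemigroup, `π` an
endomorphism with `π(T) = S`, and `B = {t : π^k t ∈ T for all k ≥ 0}`. If every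
`f ∈ S \ T` satisfies `π f ∈ B`, or (`π² f = π f` and `π f ∈ S \ T`), then there is a
finite set `Y ⊆ B` such that `Y ∪ (S \ T)` generates `S`. -/
theorem stmt_4 {S : Type*} [Semigroup S]
    (hfg : ∃ A : Finset S, Subsemigroup.closure (A : Set S) = ⊤)
    (T : Subsemigroup S) (hfin : ((T : Set S)ᶜ).Finite)
    (π : S →ₙ* S) (hsurjT : π '' (T : Set S) = Set.univ)
    (B : Set S) (hB : B = {t : S | ∀ k : ℕ, (⇑π)^[k] t ∈ T})
    (hf : ∀ f ∈ (T : Set S)ᶜ, π f ∈ B ∨ (π (π f) = π f ∧ π f ∈ (T : Set S)ᶜ)) :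
    ∃ Y : Finset S, (Y : Set S) ⊆ B ∧
      Subsemigroup.closure ((Y : Set S) ∪ (T : Set S)ᶜ) = ⊤ := by
  classical
  obtain ⟨A, hA⟩ := hfg
  set F : Set S := (T : Set S)ᶜ with hFdef
  -- π is surjective
  have hsurj : Function.Surjective π := by
    intro s
    have : s ∈ π '' (T : Set S) := hsurjT ▸ Set.mem_univ s
    obtain ⟨t, _, ht⟩ := this
    exact ⟨t, ht⟩
  -- B is closed under π
  have hBπ : ∀ x ∈ B, π x ∈ B := by
    intro x hx
    rw [hB] at hx ⊢
    intro k
    have := hx (k + 1)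
    rwa [Function.iterate_succ_apply] at this
  have hBiter : ∀ x ∈ B, ∀ j : ℕ, (⇑π)^[j] x ∈ B := by
    intro x hx j
    induction j with
    | zero => exact hx
    | succ j ih => rw [Function.iterate_succ_apply']; exact hBπ _ ih
  -- iterates of elements of F land in B ∪ F
  have hFit : ∀ x ∈ F, ∀ m : ℕ, 1 ≤ m → (⇑π)^[m] x ∈ B ∪ F := by
    intro x hx m hm
    rcases hf x hx with hb | ⟨hfix, hft⟩
    · left
      obtain ⟨j, rfl⟩ : ∃ j, m = j + 1 := ⟨m - 1, by omega⟩
      rw [Function.iterate_succ_apply]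
      exact hBiter _ hb j
    · right
      have hconst : ∀ m : ℕ, 1 ≤ m → (⇑π)^[m] x = π x := by
        intro m hm
        induction m with
        | zero => omega
        | succ m ih =>
          rcases Nat.eq_or_lt_of_le hm with h | h
          · simp [← h]
          · rw [Function.iterate_succ_apply', ih (by omega), hfix]
      rw [hconst m hm]
      exact hft
  -- every element's iterates eventually remain in B ∪ F
  have hEsc : ∀ a : S, ∃ m : ℕ, ∀ j : ℕ, m ≤ j → (⇑π)^[j] a ∈ B ∪ F := by
    intro a
    by_cases h : ∀ k : ℕ, (⇑π)^[k] a ∈ T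
    · refine ⟨0, fun j _ => Or.inl ?_⟩
      rw [hB]
      intro k
      rw [← Function.iterate_add_apply]
      exact h (k + j)
    · push_neg at h
      obtain ⟨k, hk⟩ := h
      refine ⟨k, fun j hj => ?_⟩
      rcases Nat.eq_or_lt_of_le hj with rfl | hlt
      · exact Or.inr hk
      · have := hFit _ hk (j - k) (by omega)
        rwa [← Function.iterate_add_apply, (by omega : j - k + k = j)] at this
  choose esc hesc using hEsc
  set M : ℕ := A.sup esc with hM
  -- all M-th iterates of generators lie in B ∪ F
  have hgen : ∀ a ∈ (A : Set S), (⇑π)^[M] a ∈ B ∪ F := by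
    intro a ha
    exact hesc a M (Finset.le_sup ha)
  -- closure (B ∪ F) = ⊤
  have htop : Subsemigroup.closure (B ∪ F) = ⊤ := by
    have key : ∀ t : S, (iterHom π M) t ∈ Subsemigroup.closure (B ∪ F) := by
      intro t
      have ht : t ∈ Subsemigroup.closure (A : Set S) := hA ▸ Subsemigroup.mem_top t
      induction ht using Subsemigroup.closure_induction with
      | mem a ha =>
        exact Subsemigroup.subset_closure (by rw [iterHom_coe]; exact hgen a ha)
      | mul x y hx hy ihx ihy =>
        rw [map_mul]
        exact mul_mem ihx ihy
    rw [eq_top_iff]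
    intro s _
    obtain ⟨t, rfl⟩ := (hsurj.iterate M) s
    have := key t
    rwa [iterHom_coe] at this
  -- finite extraction
  have ext : ∀ x : S, ∃ Y : Finset S, (Y : Set S) ⊆ B ∧
      x ∈ Subsemigroup.closure ((Y : Set S) ∪ F) := by
    intro x
    have hx : x ∈ Subsemigroup.closure (B ∪ F) := htop ▸ Subsemigroup.mem_top x
    induction hx using Subsemigroup.closure_induction with
    | mem z hz =>
      rcases hz with hzB | hzF
      · exact ⟨{z}, by simpa using hzB,
          Subsemigroup.subset_closure (Or.inl (by simp))⟩
      · exact ⟨∅, by simp, Subsemigroup.subset_closure (Or.inr hzF)⟩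
    | mul x y hx hy ihx ihy =>
      obtain ⟨Y₁, hY₁, hm₁⟩ := ihx
      obtain ⟨Y₂, hY₂, hm₂⟩ := ihy
      refine ⟨Y₁ ∪ Y₂, ?_, ?_⟩
      · intro z hz
        simp only [Finset.coe_union, Set.mem_union] at hz
        exact hz.elim (fun h => hY₁ h) (fun h => hY₂ h)
      · have h₁ : x ∈ Subsemigroup.closure (((Y₁ ∪ Y₂ : Finset S) : Set S) ∪ F) :=
          Subsemigroup.closure_mono
            (Set.union_subset_union_left _ (by simp [Finset.coe_union])) hm₁
        have h₂ : y ∈ Subsemigroup.closure (((Y₁ ∪ Y₂ : Finset S) : Set S) ∪ F) :=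
          Subsemigroup.closure_mono
            (Set.union_subset_union_left _ (by simp [Finset.coe_union])) hm₂
        exact mul_mem h₁ h₂
  choose Yf hYfB hYfmem using ext
  refine ⟨A.biUnion Yf, ?_, ?_⟩
  · intro z hz
    simp only [Finset.coe_biUnion, Set.mem_iUnion] at hz
    obtain ⟨a, _, hz⟩ := hz
    exact hYfB a hz
  · rw [eq_top_iff, ← hA]
    rw [Subsemigroup.closure_le]
    intro a ha
    refine Subsemigroup.closure_mono
      (Set.union_subset_union_left _ ?_) (hYfmem a)
    intro z hz
    simp only [Finset.coe_biUnion, Set.mem_iUnion]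
    exact ⟨a, ha, hz⟩
end

section
/- Let S be a semigroup, let ψ be a surjective semigroup endomorphism of S, and let T be a subsemigroup of S such that S \ T is finite. If ψ(ψ(T)) = ψ(T), then T ⊆ ψ(T). -/
/-- If `ψ` is a surjective endomorphism of a semigroup `S`, `T` is a cofinite
subsemigroup, and `ψ(ψ(T)) = ψ(T)`, then `T ⊆ ψ(T)`. -/
theorem stmt_5 {S : Type*} [Semigroup S] (ψ : S →ₙ* S)
    (hsurj : Function.Surjective ψ)
    (T : Subsemigroup S) (hfin : ((T : Set S)ᶜ).Finite)
    (h : ψ '' (ψ '' (T : Set S)) = ψ '' (T : Set S)) :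
    (T : Set S) ⊆ ψ '' (T : Set S) := by
  set A : Set S := ψ '' (T : Set S) with hA
  set P : Set S := ψ ⁻¹' Aᶜ with hP
  have hPT : P ⊆ (T : Set S)ᶜ := by
    intro x hx hxT
    exact hx (Set.mem_image_of_mem ψ hxT)
  have hPA : P ⊆ Aᶜ := by
    intro x hx hxA
    exact hx (h ▸ Set.mem_image_of_mem ψ hxA)
  have himg : ψ '' P = Aᶜ := Set.image_preimage_eq _ hsurj
  have hPfin : P.Finite := hfin.subset hPT
  have hAcfin : (Aᶜ : Set S).Finite := himg ▸ hPfin.image ψ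
  have hle : (Aᶜ : Set S).ncard ≤ P.ncard := by
    calc (Aᶜ : Set S).ncard = (ψ '' P).ncard := by rw [himg]
    _ ≤ P.ncard := Set.ncard_image_le hPfin
  have hPeq : P = Aᶜ := Set.eq_of_subset_of_ncard_le hPA hle hAcfin
  have : Aᶜ ⊆ (T : Set S)ᶜ := hPeq ▸ hPT
  intro x hx
  by_contra hxA
  exact this hxA hx
end

section
/- There exists a semigroup S and a subsemigroup T of S such that the complement S \ T has exactly one element, T is hopfian, and S is not hopfian. (Hence hopficity is not in general preserved by finite Rees index extensions.) -/
/-- A semigroup is *hopfian* if every surjective semigroup endomorphism is injective. -/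
def IsHopfian (S : Type*) [Semigroup S] : Prop :=
  ∀ f : S →ₙ* S, Function.Surjective f → Function.Injective f

/-!
Take `S = W⁰`, the semigroup `W = ⟨a₀, a₁, … | aᵢ aⱼ = aᵢ aᵢ₊₁ (j > i + 1)⟩` with a zero
adjoined, and `T = W`. Normal forms in `W` (the type `StepWord`, with `gen n = aₙ`) are the
nonempty words in which every letter exceeds its predecessor by at most one, and a product is
normalised by capping the letters of the right factor from left to right (`clamp`).

`W` is hopfian: length is additive, so under a surjective endomorphism `ψ` each generator is the
image of a generator, and the relations force the index map `n ↦ last letter of ψ aₙ` to be a strictly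
increasing surjection of `ℕ`, i.e. the identity. `W⁰` is not: the words avoiding `a₀` form a copy
of `W` (shift all letters down by one) whose complement is an ideal, so sending that ideal to `0`
gives a surjective endomorphism of `W⁰` identifying `a₀` with `0`.
-/

open Function

theorem IsHopfian.of_mulEquiv {S T : Type*} [Semigroup S] [Semigroup T] (e : S ≃* T)
    (hS : IsHopfian S) : IsHopfian T := by
  intro f hf x y hxy
  have hinj := hS ((e.symm : T →ₙ* S).comp (f.comp (e : S →ₙ* T)))
    (e.symm.surjective.comp (hf.comp e.surjective))
  simpa using @hinj (e.symm x) (e.symm y) (by simp [hxy])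

namespace WithZero

variable {α : Type*}

@[simps]
def coeMulHom [Mul α] : α →ₙ* WithZero α where
  toFun := (↑)
  map_mul' _ _ := rfl

theorem compl_srange_coeMulHom [Mul α] :
    ((coeMulHom : α →ₙ* WithZero α).srange : Set (WithZero α))ᶜ = {0} := by
  ext x
  induction x using WithZero.recZeroCoe <;> simp

theorem isHopfian_srange_coeMulHom [Semigroup α] (h : IsHopfian α) :
    IsHopfian (coeMulHom : α →ₙ* WithZero α).srange :=
  h.of_mulEquiv <| MulEquiv.ofBijective coeMulHom.srangeRestrict
    ⟨fun _ _ hxy => coe_injective (congrArg Subtype.val hxy), MulHom.srangeRestrict_surjective _⟩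

def liftMulHom {β : Type*} [Mul α] [MulZeroClass β] (d : α →ₙ* β) : WithZero α →ₙ* β where
  toFun := recZeroCoe (motive := fun _ => β) 0 d
  map_mul'
    | 0, _ => (zero_mul _).symm
    | (_ : α), 0 => (mul_zero _).symm
    | (x : α), (y : α) => map_mul d x y

theorem not_isHopfian_of_surjective [Semigroup α] {d : α →ₙ* WithZero α} (hd : Surjective d) :
    ¬ IsHopfian (WithZero α) := by
  intro h
  obtain ⟨x, hx⟩ := hd 0
  have hsurj : Surjective (liftMulHom d) := fun y =>
    let ⟨x, hx⟩ := hd y; ⟨x, hx⟩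
  exact coe_ne_zero (h _ hsurj (hx : liftMulHom d x = liftMulHom d 0))

end WithZero

theorem eq_id_of_surjective_of_min_eq {τ : ℕ → ℕ} (hτ : Surjective τ)
    (h : ∀ i j, i < j → min (τ j) (τ i + 1) = min (τ (i + 1)) (τ i + 1)) : τ = id := by
  have hmono : StrictMono τ := strictMono_nat_of_lt_succ fun i => by
    by_contra! hle
    have hfin : (Set.range τ).Finite := by
      refine ((Set.finite_Iic (i + 1)).image τ).subset ?_
      rintro _ ⟨j, rfl⟩
      rcases le_or_gt j (i + 1) with hj | hj
      · exact ⟨j, hj, rfl⟩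
      · exact ⟨i + 1, Set.mem_Iic.2 le_rfl, by have := h i j (by omega); omega⟩
    exact Set.infinite_univ (hτ.range_eq ▸ hfin)
  exact congrArg DFunLike.coe
    (Subsingleton.elim (hmono.orderIsoOfSurjective τ hτ) (OrderIso.refl ℕ))

theorem List.getLastD_append {α : Type*} (u v : List α) (d : α) :
    (u ++ v).getLastD d = v.getLastD (u.getLastD d) := by
  simp [List.getLast?_append]

@[ext]
structure StepWord where
  letters : List ℕ
  ne_nil : letters ≠ []
  isChain : letters.IsChain (fun a b => b ≤ a + 1)

namespace StepWord

def clamp : ℕ → List ℕ → List ℕ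
  | _, [] => []
  | p, a :: t => min a (p + 1) :: clamp (min a (p + 1)) t

@[simp] theorem clamp_nil (p : ℕ) : clamp p [] = [] := rfl

@[simp] theorem clamp_cons (p a : ℕ) (t : List ℕ) :
    clamp p (a :: t) = min a (p + 1) :: clamp (min a (p + 1)) t := rfl

@[simp] theorem length_clamp (p : ℕ) (l : List ℕ) : (clamp p l).length = l.length := by
  induction l generalizing p <;> simp [*]

theorem clamp_clamp_of_le {p q : ℕ} (h : p ≤ q) (l : List ℕ) :
    clamp p (clamp q l) = clamp p l := by
  induction l generalizing p q with
  | nil => rfl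
  | cons a t ih =>
    have hmin : min (min a (q + 1)) (p + 1) = min a (p + 1) := by omega
    rw [clamp_cons, clamp_cons, clamp_cons, hmin, ih (by omega)]

theorem clamp_append (p : ℕ) (u v : List ℕ) :
    clamp p (u ++ v) = clamp p u ++ clamp ((clamp p u).getLastD p) v := by
  induction u generalizing p with
  | nil => rfl
  | cons a t ih => simp only [List.cons_append, clamp_cons, ih, List.getLastD_cons]

theorem getLastD_clamp_le {l : List ℕ} (hl : l ≠ []) (p q r : ℕ) :
    (clamp p l).getLastD q ≤ l.getLastD r := by
  induction l generalizing p q r with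
  | nil => contradiction
  | cons a t ih =>
    rcases t with _ | ⟨b, s⟩
    · simp
    · rw [clamp_cons, List.getLastD_cons, List.getLastD_cons]
      exact ih (List.cons_ne_nil _ _) _ _ _

theorem isChain_cons_clamp (p : ℕ) (l : List ℕ) :
    (p :: clamp p l).IsChain (fun a b => b ≤ a + 1) := by
  induction l generalizing p with
  | nil => exact List.isChain_singleton p
  | cons a t ih => exact (ih _).cons (by simp)

theorem clamp_eq_self {p : ℕ} {l : List ℕ} (h : (p :: l).IsChain (fun a b => b ≤ a + 1)) :
    clamp p l = l := by
  induction l generalizing p with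
  | nil => rfl
  | cons b t ih =>
    obtain ⟨hb, ht⟩ := List.isChain_cons_cons.1 h
    rw [clamp_cons, min_eq_left hb, ih ht]

theorem zero_mem_clamp_iff (p : ℕ) (l : List ℕ) : 0 ∈ clamp p l ↔ 0 ∈ l := by
  induction l generalizing p with
  | nil => rfl
  | cons a t ih =>
    rw [clamp_cons, List.mem_cons, List.mem_cons, ih, show 0 = min a (p + 1) ↔ 0 = a by omega]

theorem map_succ_clamp (p : ℕ) (l : List ℕ) :
    (clamp p l).map (· + 1) = clamp (p + 1) (l.map (· + 1)) := by
  induction l generalizing p with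
  | nil => rfl
  | cons a t ih =>
    have hmin : min a (p + 1) + 1 = min (a + 1) (p + 1 + 1) := by omega
    simp only [clamp_cons, List.map_cons, ih, hmin]

def last (u : StepWord) : ℕ := u.letters.getLastD 0

instance : Mul StepWord :=
  ⟨fun u v => ⟨u.letters ++ clamp (last u) v.letters, by simp [u.ne_nil], by
    refine List.isChain_append.2 ⟨u.isChain, (isChain_cons_clamp _ _).tail, fun x hx => ?_⟩
    obtain rfl : last u = x := by simp [last, Option.mem_def.1 hx]
    exact (List.isChain_cons.1 (isChain_cons_clamp _ _)).1⟩⟩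

theorem letters_mul (u v : StepWord) :
    (u * v).letters = u.letters ++ clamp (last u) v.letters := rfl

instance : Semigroup StepWord where
  mul_assoc u v w := StepWord.ext <| by
    simp only [letters_mul, last, List.append_assoc, List.getLastD_append, clamp_append,
      clamp_clamp_of_le (getLastD_clamp_le v.ne_nil _ _ 0)]

def gen (n : ℕ) : StepWord := ⟨[n], List.cons_ne_nil _ _, List.isChain_singleton n⟩

theorem gen_injective : Injective gen := fun _ _ h => by
  simpa [gen] using congrArg letters h

@[simp] theorem letters_gen (n : ℕ) : (gen n).letters = [n] := rfl

@[simp] theorem last_gen (n : ℕ) : last (gen n) = n := rfl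

theorem length_mul (u v : StepWord) :
    (u * v).letters.length = u.letters.length + v.letters.length := by
  simp [letters_mul]

theorem length_pos (u : StepWord) : 0 < u.letters.length := List.length_pos_iff.2 u.ne_nil

theorem eq_gen_last_of_length_eq_one {u : StepWord} (h : u.letters.length = 1) :
    u = gen (last u) := by
  obtain ⟨a, ha⟩ := List.length_eq_one_iff.1 h
  exact StepWord.ext (by simp [ha, gen, last])

theorem gen_mul_gen_of_lt {i j : ℕ} (h : i < j) : gen i * gen j = gen i * gen (i + 1) :=
  StepWord.ext <| by
    simp only [letters_mul, letters_gen, last_gen, clamp_cons,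
      show min j (i + 1) = min (i + 1) (i + 1) by omega]

theorem mul_gen_eq_mul_gen_iff (u : StepWord) (a b : ℕ) :
    u * gen a = u * gen b ↔ min a (last u + 1) = min b (last u + 1) := by
  simp [StepWord.ext_iff, letters_mul]

theorem closure_range_gen : Subsemigroup.closure (Set.range gen) = ⊤ := by
  refine (Subsemigroup.eq_top_iff' _).2 fun u => ?_
  obtain ⟨l, hl, hchain⟩ := u
  induction l with
  | nil => contradiction
  | cons a t ih =>
    rcases t with _ | ⟨b, s⟩
    · exact Subsemigroup.subset_closure ⟨a, rfl⟩
    · have hsplit : (⟨a :: b :: s, hl, hchain⟩ : StepWord) =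
          gen a * ⟨b :: s, List.cons_ne_nil _ _, (List.isChain_cons_cons.1 hchain).2⟩ :=
        StepWord.ext (by rw [letters_mul, last_gen, letters_gen, clamp_eq_self hchain]; rfl)
      rw [hsplit]
      exact mul_mem (Subsemigroup.subset_closure ⟨a, rfl⟩) (ih _ _)

section Rigidity

variable {ψ : StepWord →ₙ* StepWord}

theorem exists_map_gen_eq_gen (hψ : Surjective ψ) (n : ℕ) : ∃ m, ψ (gen m) = gen n := by
  obtain ⟨z, hz⟩ := hψ (gen n)
  have key : ∀ x ∈ Subsemigroup.closure (Set.range gen),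
      (ψ x).letters.length = 1 → x ∈ Set.range gen := by
    intro x hx
    induction hx using Subsemigroup.closure_induction with
    | mem x hx => exact fun _ => hx
    | mul x y _ _ _ _ =>
      rw [map_mul, length_mul]
      have := length_pos (ψ x)
      have := length_pos (ψ y)
      omega
  obtain ⟨m, rfl⟩ := key z (closure_range_gen ▸ Subsemigroup.mem_top z) (by rw [hz]; rfl)
  exact ⟨m, hz⟩

theorem length_map_gen_eq_one (hψ : Surjective ψ) {j : ℕ} (hj : 0 < j) :
    (ψ (gen j)).letters.length = 1 := by
  have hconst : ∀ k, 0 < k → (ψ (gen k)).letters.length = (ψ (gen 1)).letters.length := by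
    intro k hk
    have := congrArg (fun u => (ψ u).letters.length) (gen_mul_gen_of_lt hk)
    simp only [map_mul, length_mul, zero_add] at this
    omega
  obtain ⟨m₀, h₀⟩ := exists_map_gen_eq_gen hψ 0
  obtain ⟨m₁, h₁⟩ := exists_map_gen_eq_gen hψ 1
  have hne : m₀ ≠ m₁ := by
    rintro rfl
    exact zero_ne_one (gen_injective (h₀.symm.trans h₁))
  rw [hconst j hj]
  rcases Nat.eq_zero_or_pos m₀ with h | h
  · rw [← hconst m₁ (by omega), h₁]; rfl
  · rw [← hconst m₀ h, h₀]; rfl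

theorem min_last_map_gen (hψ : Surjective ψ) {i j : ℕ} (h : i < j) :
    min (last (ψ (gen j))) (last (ψ (gen i)) + 1) =
      min (last (ψ (gen (i + 1)))) (last (ψ (gen i)) + 1) := by
  have := congrArg ψ (gen_mul_gen_of_lt h)
  rwa [map_mul, map_mul,
    eq_gen_last_of_length_eq_one (length_map_gen_eq_one hψ (by omega : 0 < j)),
    eq_gen_last_of_length_eq_one (length_map_gen_eq_one hψ (by omega : 0 < i + 1)),
    mul_gen_eq_mul_gen_iff] at this

theorem eq_id_of_surjective (hψ : Surjective ψ) : ψ = MulHom.id StepWord := by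
  have hlast : ∀ {m n}, ψ (gen m) = gen n → last (ψ (gen m)) = n := fun h => by rw [h, last_gen]
  have hid : (fun n => last (ψ (gen n))) = id := eq_id_of_surjective_of_min_eq
    (fun n => (exists_map_gen_eq_gen hψ n).imp fun _ => hlast) (fun _ _ => min_last_map_gen hψ)
  refine MulHom.eq_of_eqOn_dense closure_range_gen ?_
  rintro _ ⟨n, rfl⟩
  obtain ⟨m, hm⟩ := exists_map_gen_eq_gen hψ n
  obtain rfl : m = n := (congrFun hid m).symm.trans (hlast hm)
  exact hm

end Rigidity

theorem isHopfian : IsHopfian StepWord := fun ψ hψ => by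
  rw [eq_id_of_surjective hψ]
  exact injective_id

def shift (u : StepWord) : StepWord :=
  ⟨u.letters.map (· + 1), by simp [u.ne_nil],
    (List.isChain_map _).2 (u.isChain.imp fun _ _ h => by omega)⟩

def unshift (u : StepWord) : StepWord :=
  ⟨u.letters.map (· - 1), by simp [u.ne_nil],
    (List.isChain_map _).2 (u.isChain.imp fun _ _ h => by omega)⟩

theorem last_shift (u : StepWord) : last (shift u) = last u + 1 := by
  obtain ⟨l, hl, -⟩ := u
  simp [last, shift, List.getLast?_eq_some_getLast hl]

theorem shift_mul (u v : StepWord) : shift (u * v) = shift u * shift v := by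
  ext1
  rw [letters_mul, last_shift]
  simp [shift, letters_mul, map_succ_clamp]

theorem unshift_shift (u : StepWord) : unshift (shift u) = u := by
  ext1
  simp [shift, unshift, Function.comp_def]

theorem shift_unshift {u : StepWord} (hu : 0 ∉ u.letters) : shift (unshift u) = u := by
  ext1
  refine (List.map_map ..).trans (List.map_congr_left fun a ha => ?_) |>.trans u.letters.map_id
  have : a ≠ 0 := fun h => hu (h ▸ ha)
  simp; omega

theorem zero_notMem_shift (u : StepWord) : 0 ∉ (shift u).letters := by
  simp [shift]

theorem zero_mem_mul_iff (u v : StepWord) :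
    0 ∈ (u * v).letters ↔ 0 ∈ u.letters ∨ 0 ∈ v.letters := by
  rw [letters_mul, List.mem_append, zero_mem_clamp_iff]

theorem unshift_mul {u v : StepWord} (hu : 0 ∉ u.letters) (hv : 0 ∉ v.letters) :
    unshift (u * v) = unshift u * unshift v := by
  conv_lhs => rw [← shift_unshift hu, ← shift_unshift hv, ← shift_mul, unshift_shift]

def unshiftOrZero : StepWord →ₙ* WithZero StepWord where
  toFun u := if 0 ∈ u.letters then 0 else unshift u
  map_mul' u v := by
    by_cases hu : 0 ∈ u.letters
    · simp [zero_mem_mul_iff, hu]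
    by_cases hv : 0 ∈ v.letters
    · simp [zero_mem_mul_iff, hv]
    simp [zero_mem_mul_iff, hu, hv, unshift_mul hu hv]

theorem unshiftOrZero_surjective : Surjective unshiftOrZero := by
  intro x
  induction x using WithZero.recZeroCoe with
  | zero => exact ⟨gen 0, by simp [unshiftOrZero]⟩
  | coe u => exact ⟨shift u, by simp [unshiftOrZero, zero_notMem_shift, unshift_shift]⟩

end StepWord

/-- There exist a semigroup `S` and a subsemigroup `T` such that `S \ T` has exactly one
element, `T` is hopfian, and `S` is not hopfian. -/
theorem stmt_6 : ∃ (S : Type) (_ : Semigroup S) (T : Subsemigroup S),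
    (∃ x : S, (T : Set S)ᶜ = {x}) ∧ IsHopfian T ∧ ¬ IsHopfian S :=
  ⟨WithZero StepWord, inferInstance, WithZero.coeMulHom.srange,
    ⟨0, WithZero.compl_srange_coeMulHom⟩, WithZero.isHopfian_srange_coeMulHom StepWord.isHopfian,
    WithZero.not_isHopfian_of_surjective StepWord.unshiftOrZero_surjective⟩
end

section
/- There exists a hopfian semigroup S and a subsemigroup T of S such that the complement S \ T is finite and T is not hopfian. (Hence hopficity is not in general inherited by subsemigroups of finite Rees index.) -/
theorem IsHopfian.of_mulEquiv_s7 {M N : Type*} [Semigroup M] [Semigroup N] (e : M ≃* N)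
    (hM : IsHopfian M) : IsHopfian N := by
  intro f hf
  have hconj := hM (e.symm.toMulHom.comp (f.comp e.toMulHom))
    (e.symm.surjective.comp (hf.comp e.surjective))
  have hf_eq : ⇑f = e ∘ (e.symm.toMulHom.comp (f.comp e.toMulHom)) ∘ e.symm := by
    ext x
    simp
  rw [hf_eq]
  exact e.injective.comp (hconj.comp e.symm.injective)

inductive WithTwin (M : Type*) (c : M) : Type _
  | of : M → WithTwin M c
  | twin : WithTwin M c

namespace WithTwin

variable {M : Type*} {c : M}

def proj : WithTwin M c → M
  | of x => x
  | twin => c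

@[simp] lemma proj_of (x : M) : proj (of x : WithTwin M c) = x := rfl

@[simp] lemma proj_twin : proj (twin : WithTwin M c) = c := rfl

lemma of_ne_twin (x : M) : (of x : WithTwin M c) ≠ twin := nofun

instance [Mul M] : Mul (WithTwin M c) := ⟨fun a b => of (proj a * proj b)⟩

lemma mul_def [Mul M] (a b : WithTwin M c) : a * b = of (proj a * proj b) := rfl

instance [Semigroup M] : Semigroup (WithTwin M c) where
  mul_assoc a b d := by simp only [mul_def, proj_of, mul_assoc]

section Semigroup

variable [Semigroup M]

def ofHom : M →ₙ* WithTwin M c := ⟨of, fun _ _ => rfl⟩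

def projHom : WithTwin M c →ₙ* M := ⟨proj, fun _ _ => rfl⟩

lemma finite_compl_srange_ofHom :
    (((ofHom : M →ₙ* WithTwin M c).srange : Set (WithTwin M c))ᶜ).Finite := by
  refine (Set.finite_singleton twin).subset fun a ha => ?_
  cases a with
  | of x => exact absurd ⟨x, rfl⟩ ha
  | twin => rfl

lemma isHopfian_srange_ofHom_iff :
    IsHopfian (ofHom : M →ₙ* WithTwin M c).srange ↔ IsHopfian M :=
  let e : M ≃* (ofHom : M →ₙ* WithTwin M c).srange :=
    MulEquiv.ofLeftInverse (f := ofHom) (g := proj) fun _ => rfl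
  ⟨IsHopfian.of_mulEquiv_s7 e.symm, IsHopfian.of_mulEquiv_s7 e⟩

end Semigroup

section Monoid

variable [Monoid M]

lemma map_of_eq_of (f : WithTwin M c →ₙ* WithTwin M c) (x : M) :
    f (of x) = of (proj (f (of x))) := by
  have h : f (of x) = of (proj (f (of x)) * proj (f (of 1))) := by
    rw [← mul_def, ← map_mul, mul_def, proj_of, proj_of, mul_one]
  rw [h, proj_of]

lemma map_twin_of_surjective {f : WithTwin M c →ₙ* WithTwin M c} (hf : Function.Surjective f) :
    f twin = twin := by
  obtain ⟨a, ha⟩ := hf twin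
  cases a with
  | of x => exact absurd ((map_of_eq_of f x).symm.trans ha) (of_ne_twin _)
  | twin => exact ha

end Monoid

theorem isHopfian {G : Type*} [Group G] {c : G} (hc : c ≠ 1)
    (hmin : ∀ H : Subgroup G, H ≠ ⊥ → c ∈ H) : IsHopfian (WithTwin G c) := by
  intro f hf
  have hfix := map_twin_of_surjective hf
  let φ : G →* G := MonoidHom.mk' (projHom.comp (f.comp ofHom)) fun x y => map_mul _ x y
  have hφ (x : G) : f (of x) = of (φ x) := map_of_eq_of f x
  have hφc : φ c = c := by
    have h : f (of c) = twin * f (of 1) := by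
      rw [← hfix, ← map_mul, mul_def, proj_twin, proj_of, mul_one]
    calc φ c = c * φ 1 := congrArg proj h
      _ = c := by rw [map_one, mul_one]
  have hφinj : Function.Injective φ := by
    refine (MonoidHom.ker_eq_bot_iff φ).1 (by_contra fun hker => hc ?_)
    rw [← hφc]
    exact hmin _ hker
  rintro (x | _) (y | _) hxy
  · rw [hφ, hφ] at hxy
    exact congrArg of (hφinj (of.inj hxy))
  · rw [hφ, hfix] at hxy
    exact absurd hxy (of_ne_twin _)
  · rw [hφ, hfix] at hxy
    exact absurd hxy.symm (of_ne_twin _)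
  · rfl

end WithTwin

theorem Subgroup.mem_of_pow_two_pow_eq_one {G : Type*} [Group G] {c : G}
    (h2 : ∀ g : G, g ^ 2 = 1 → g = 1 ∨ g = c) {H : Subgroup G} :
    ∀ (k : ℕ) {g : G}, g ∈ H → g ≠ 1 → g ^ 2 ^ k = 1 → c ∈ H
  | 0, g, _, hg1, hk => absurd (by simpa using hk) hg1
  | k + 1, g, hg, hg1, hk => by
    by_cases hsq : g ^ 2 = 1
    · exact (h2 g hsq).resolve_left hg1 ▸ hg
    · refine Subgroup.mem_of_pow_two_pow_eq_one h2 k (H.pow_mem hg 2) hsq ?_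
      rwa [← pow_mul, ← pow_succ']

theorem IsPGroup.mem_of_ne_bot {G : Type*} [Group G] {c : G} (hG : IsPGroup 2 G)
    (h2 : ∀ g : G, g ^ 2 = 1 → g = 1 ∨ g = c) {H : Subgroup G} (hH : H ≠ ⊥) : c ∈ H := by
  obtain ⟨g, hg, hg1⟩ := H.bot_or_exists_ne_one.resolve_left hH
  obtain ⟨k, hk⟩ := hG g
  exact Subgroup.mem_of_pow_two_pow_eq_one h2 k hg hg1 hk

section PrimaryComponent

open CommGroup

variable {K : Type*} [Field K]

def primaryComponentNegOne : primaryComponent Kˣ 2 := ⟨-1, 1, by simp⟩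

theorem eq_one_or_eq_primaryComponentNegOne (g : primaryComponent Kˣ 2) (h : g ^ 2 = 1) :
    g = 1 ∨ g = primaryComponentNegOne := by
  have hK : ((g : Kˣ) : K) ^ 2 = 1 := by
    simpa using congrArg (fun u : primaryComponent Kˣ 2 => ((u : Kˣ) : K)) h
  rcases sq_eq_one_iff.1 hK with h1 | h1
  · exact .inl (Subtype.ext (Units.ext h1))
  · exact .inr (Subtype.ext (Units.ext h1))

theorem primaryComponentNegOne_ne_one [NeZero (2 : K)] :
    (primaryComponentNegOne : primaryComponent Kˣ 2) ≠ 1 := by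
  intro h
  have h1 : (-1 : K) = 1 := by
    simpa [primaryComponentNegOne] using
      congrArg (fun u : primaryComponent Kˣ 2 => ((u : Kˣ) : K)) h
  exact (two_ne_zero : (2 : K) ≠ 0) (by linear_combination -h1)

theorem powMonoidHom_primaryComponent_surjective [IsAlgClosed K] {p : ℕ} (hp : 0 < p) :
    Function.Surjective (powMonoidHom p : primaryComponent Kˣ p →* primaryComponent Kˣ p) := by
  rintro ⟨g, k, hk⟩
  obtain ⟨z, hz⟩ := IsAlgClosed.exists_pow_nat_eq (g : K) hp
  have hz0 : z ≠ 0 := by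
    rintro rfl
    exact g.ne_zero (by rw [← hz, zero_pow hp.ne'])
  have hu : Units.mk0 z hz0 ^ p = g := Units.ext (by simpa using hz)
  exact ⟨⟨Units.mk0 z hz0, k + 1, by rw [pow_succ', pow_mul, hu, hk]⟩, Subtype.ext hu⟩

theorem not_isHopfian_primaryComponent_two [IsAlgClosed K] [NeZero (2 : K)] :
    ¬ IsHopfian (primaryComponent Kˣ 2) := by
  intro h
  have hinj := h (powMonoidHom 2 : primaryComponent Kˣ 2 →* _).toMulHom
    (powMonoidHom_primaryComponent_surjective two_pos)
  refine primaryComponentNegOne_ne_one (hinj ?_)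
  show primaryComponentNegOne ^ 2 = 1 ^ 2
  rw [one_pow]
  exact Subtype.ext (Units.ext (by simp [primaryComponentNegOne]))

end PrimaryComponent

/-- There exist a hopfian semigroup `S` and a subsemigroup `T` with `S \ T` finite
such that `T` is not hopfian. -/
theorem stmt_7 : ∃ (S : Type) (_ : Semigroup S) (T : Subsemigroup S),
    ((T : Set S)ᶜ).Finite ∧ IsHopfian S ∧ ¬ IsHopfian T :=
  ⟨WithTwin (CommGroup.primaryComponent ℂˣ 2) primaryComponentNegOne, inferInstance,
    WithTwin.ofHom.srange, WithTwin.finite_compl_srange_ofHom,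
    WithTwin.isHopfian primaryComponentNegOne_ne_one fun _ hH =>
      CommGroup.primaryComponent.isPGroup.mem_of_ne_bot eq_one_or_eq_primaryComponentNegOne hH,
    fun h => not_isHopfian_primaryComponent_two (WithTwin.isHopfian_srange_ofHom_iff.1 h)⟩
end

section
/- Let F be the free semigroup on a three-element alphabet. Then there exists a set X, a right action of F on X (i.e., a map X × F → X, (x, s) ↦ x·s, satisfying x·(st) = (x·s)·t for all x ∈ X and s, t ∈ F), an element x₀ ∈ X with X = {x₀} ∪ {x₀·s : s ∈ F} (the act is cyclic), and a map ψ: X → X which is surjective, not injective, and satisfies (x·s)ψ = (xψ)·s for all x ∈ X, s ∈ F. -/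
/-!
Take for `X` two copies of the integer line glued along the positive integers, and let the
three generators act as the translation by `+1`, the translation by `-1` into the first copy,
and the exchange of the two copies (the identity on the glued part). The translation
`ψ` by `+1` commutes with all three. It is onto because every point has a predecessor on its
own copy, and it is not injective because it sends the two copies of `0` to the same point `1`.
Starting from `0` on the first copy, `-1` and `+1` reach the whole first copy and the exchange
reaches the second.
-/

namespace FreeSemigroup

variable {α X : Type*} (f : α → Function.End X)

def actOfMaps (x : X) (s : FreeSemigroup α) : X :=
  (lift (fun i => MulOpposite.op (f i)) s).unop x

theorem actOfMaps_mul (x : X) (s t : FreeSemigroup α) :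
    actOfMaps f x (s * t) = actOfMaps f (actOfMaps f x s) t := by
  simp only [actOfMaps, map_mul, MulOpposite.unop_mul]
  rfl

theorem actOfMaps_of (x : X) (i : α) : actOfMaps f x (of i) = f i x := by
  simp only [actOfMaps, lift_of, MulOpposite.unop_op]

theorem actOfMaps_comm {ψ : X → X} (hψ : ∀ i, Function.Commute ψ (f i))
    (s : FreeSemigroup α) (x : X) : ψ (actOfMaps f x s) = actOfMaps f (ψ x) s := by
  induction s using FreeSemigroup.recOnMul generalizing x with
  | ih1 i => simp only [actOfMaps_of, (hψ i) x]
  | ih2 s t hs ht => simp only [actOfMaps_mul, hs, ht]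

def generatedSubact (x₀ : X) : Set X := {x | x = x₀ ∨ ∃ s, x = actOfMaps f x₀ s}

theorem self_mem_generatedSubact (x₀ : X) : x₀ ∈ generatedSubact f x₀ := Or.inl rfl

theorem apply_mem_generatedSubact {x₀ x : X} (hx : x ∈ generatedSubact f x₀) (i : α) :
    f i x ∈ generatedSubact f x₀ := by
  rcases hx with rfl | ⟨s, rfl⟩
  · exact Or.inr ⟨of i, (actOfMaps_of f _ i).symm⟩
  · exact Or.inr ⟨s * of i, by rw [actOfMaps_mul, actOfMaps_of]⟩

end FreeSemigroup

namespace TwoBranchLine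

/-- `pos n` is the point `n + 1` of the glued part; `main k` and `side k` are the point `-k` of
the first and of the second copy. -/
inductive Point : Type
  | pos (n : ℕ)
  | main (k : ℕ)
  | side (k : ℕ)

open Point

def up : Point → Point
  | pos n => pos (n + 1)
  | main 0 => pos 0
  | main (k + 1) => main k
  | side 0 => pos 0
  | side (k + 1) => side k

def down : Point → Point
  | pos 0 => main 0
  | pos (n + 1) => pos n
  | main k => main (k + 1)
  | side k => main (k + 1)

def swap : Point → Point
  | pos n => pos n
  | main k => side k
  | side k => main k

theorem commute_up_down : Function.Commute up down := by
  rintro ((_ | _) | (_ | _) | (_ | _)) <;> rfl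

theorem commute_up_swap : Function.Commute up swap := by
  rintro ((_ | _) | (_ | _) | (_ | _)) <;> rfl

theorem up_surjective : Function.Surjective up
  | pos 0 => ⟨main 0, rfl⟩
  | pos (n + 1) => ⟨pos n, rfl⟩
  | main k => ⟨main (k + 1), rfl⟩
  | side k => ⟨side (k + 1), rfl⟩

theorem up_not_injective : ¬ Function.Injective up := fun h =>
  Point.noConfusion (h (a₁ := main 0) (a₂ := side 0) rfl)

def maps : Fin 3 → Function.End Point := ![up, down, swap]

theorem commute_up_maps (i : Fin 3) : Function.Commute up (maps i) := by
  fin_cases i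
  · exact Function.Commute.refl up
  · exact commute_up_down
  · exact commute_up_swap

open FreeSemigroup in
theorem mem_generatedSubact (x : Point) : x ∈ generatedSubact maps (main 0) := by
  have hmain (k : ℕ) : main k ∈ generatedSubact maps (main 0) := by
    induction k with
    | zero => exact self_mem_generatedSubact maps _
    | succ k ih => exact apply_mem_generatedSubact maps ih 1
  have hpos (n : ℕ) : pos n ∈ generatedSubact maps (main 0) := by
    induction n with
    | zero => exact apply_mem_generatedSubact maps (hmain 0) 0
    | succ n ih => exact apply_mem_generatedSubact maps ih 0
  rcases x with n | k | k
  · exact hpos n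
  · exact hmain k
  · exact apply_mem_generatedSubact maps (hmain k) 2

end TwoBranchLine

/-- The free semigroup of rank 3 admits a cyclic non-hopfian act: there are a set `X`,
a right action of the free semigroup on `X`, a generator `x₀` of the action, and a
surjective non-injective endomorphism `ψ` of the act. -/
theorem stmt_8 : ∃ (X : Type) (act : X → FreeSemigroup (Fin 3) → X),
    (∀ (x : X) (s t : FreeSemigroup (Fin 3)), act x (s * t) = act (act x s) t) ∧
    (∃ x₀ : X, ∀ x : X, x = x₀ ∨ ∃ s : FreeSemigroup (Fin 3), x = act x₀ s) ∧
    (∃ ψ : X → X, Function.Surjective ψ ∧ ¬ Function.Injective ψ ∧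
      ∀ (x : X) (s : FreeSemigroup (Fin 3)), ψ (act x s) = act (ψ x) s) := by
  open FreeSemigroup TwoBranchLine in
  exact ⟨Point, actOfMaps maps, actOfMaps_mul maps, ⟨Point.main 0, mem_generatedSubact⟩,
    up, up_surjective, up_not_injective, fun x s => actOfMaps_comm maps commute_up_maps s x⟩
end

section
/- Let F be the free semigroup on a nonempty alphabet A, and let X be a cyclic F-act, generated by an element x₀ ∈ X. Then there exists an F-act Y such that X is a subact of Y (i.e., X ⊆ Y, closed under the action, with the action of F on X the restriction of that on Y), Y \ X has exactly one element, and Y is a hopfian F-act. (Concretely, one may take Y = X ∪ {y₀} with y₀·a = x₀ for all a ∈ A.) -/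
/-!
Adjoin to `X` a point `y₀` with `y₀ · a = x₀` for every letter `a`, so that `y₀ · (a w) = x₀ · w`.
Then `y₀` generates the whole act `Y = X ∪ {y₀}` but lies in no orbit `y · F`. A surjective
endomorphism `ψ` must hit `y₀`, and only `y₀` can be sent there, since `ψ (y₀ · s) = ψ y₀ · s ≠ y₀`.
So `ψ` fixes the generator `y₀`, hence is the identity.
-/

open Function

theorem eq_id_of_surjective_of_isGenerator {Y S : Type*} (actY : Y → S → Y) (y₀ : Y)
    (hy₀ : ∀ y s, actY y s ≠ y₀) (hgen : ∀ y, y ≠ y₀ → ∃ s, y = actY y₀ s)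
    {ψ : Y → Y} (hψ : ∀ y s, ψ (actY y s) = actY (ψ y) s) (hsurj : Surjective ψ) :
    ψ = id := by
  have hfix : ψ y₀ = y₀ := by
    obtain ⟨y, hy⟩ := hsurj y₀
    by_cases h : y = y₀
    · rwa [h] at hy
    · obtain ⟨s, rfl⟩ := hgen y h
      exact absurd (hψ y₀ s ▸ hy) (hy₀ _ s)
  funext y
  by_cases h : y = y₀
  · rw [h, hfix, id]
  · obtain ⟨s, rfl⟩ := hgen y h
    rw [hψ, hfix, id]

section ActTail

variable {A X : Type*} (act : X → FreeSemigroup A → X) (x₀ : X)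

def actTail (s : FreeSemigroup A) : X :=
  match s.tail with
  | [] => x₀
  | b :: l => act x₀ ⟨b, l⟩

variable {act}

theorem actTail_mul (hact : ∀ x s t, act x (s * t) = act (act x s) t) (s t : FreeSemigroup A) :
    actTail act x₀ (s * t) = act (actTail act x₀ s) t := by
  obtain ⟨a, _ | ⟨b, l⟩⟩ := s
  · rfl
  · exact hact x₀ ⟨b, l⟩ t

theorem actTail_of_mul (a : A) (t : FreeSemigroup A) :
    actTail act x₀ (FreeSemigroup.of a * t) = act x₀ t :=
  rfl

theorem actTail_surjective [Nonempty A] (hcyc : ∀ x, x = x₀ ∨ ∃ s, x = act x₀ s) :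
    Surjective (actTail act x₀) := by
  intro x
  obtain ⟨a⟩ := ‹Nonempty A›
  rcases hcyc x with rfl | ⟨t, rfl⟩
  · exact ⟨FreeSemigroup.of a, rfl⟩
  · exact ⟨FreeSemigroup.of a * t, actTail_of_mul x₀ a t⟩

end ActTail

/-- Every cyclic act `X` of a free semigroup embeds in an act `Y` such that the
complement of (the image of) `X` in `Y` has exactly one element and `Y` is hopfian. -/
theorem stmt_9 {A : Type} [Nonempty A] (X : Type)
    (act : X → FreeSemigroup A → X)
    (hact : ∀ (x : X) (s t : FreeSemigroup A), act x (s * t) = act (act x s) t)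
    (x₀ : X) (hcyc : ∀ x : X, x = x₀ ∨ ∃ s : FreeSemigroup A, x = act x₀ s) :
    ∃ (Y : Type) (actY : Y → FreeSemigroup A → Y) (i : X → Y),
      (∀ (y : Y) (s t : FreeSemigroup A), actY y (s * t) = actY (actY y s) t) ∧
      Function.Injective i ∧
      (∀ (x : X) (s : FreeSemigroup A), i (act x s) = actY (i x) s) ∧
      (∃ y₀ : Y, (Set.range i)ᶜ = {y₀}) ∧
      (∀ ψ : Y → Y, (∀ (y : Y) (s : FreeSemigroup A), ψ (actY y s) = actY (ψ y) s) →
        Function.Surjective ψ → Function.Injective ψ) := by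
  let actY : Option X → FreeSemigroup A → Option X :=
    fun y s => some (y.elim (actTail act x₀ s) (act · s))
  refine ⟨Option X, actY, some, ?_, Option.some_injective X, fun _ _ => rfl,
    ⟨none, Set.compl_range_some X⟩, ?_⟩
  · rintro (_ | x) s t
    · exact congrArg some (actTail_mul x₀ hact s t)
    · exact congrArg some (hact x s t)
  · intro ψ hψ hsurj
    have hgen : ∀ y, y ≠ none → ∃ s, y = actY none s := by
      rintro (_ | x) hx
      · exact absurd rfl hx
      · obtain ⟨s, rfl⟩ := actTail_surjective x₀ hcyc x
        exact ⟨s, rfl⟩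
    rw [eq_id_of_surjective_of_isGenerator actY none (fun _ _ => Option.some_ne_none _) hgen hψ
      hsurj]
    exact injective_id
end

section
/- Let F be a free semigroup on a finite nonempty alphabet A, let X be an F-act, and let φ: F[X] → F[X] be a surjective semigroup endomorphism. Then the restriction of φ to F is an automorphism of F, and φ(X) = X. -/
/-!
In `F[X]` every `x ∈ X` is idempotent, while a free semigroup has none (squaring doubles the
length), so `φ` maps `X` into `X`. A product in `F[X]` lies in `F` only if both factors do,
and a product of two words has length at least two; so by surjectivity every letter is the
image of a letter. The resulting map of preimage letters is injective, hence a permutation of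
the finite alphabet, and `φ` acts on `F` as the automorphism induced by its inverse.
-/

/-- The multiplication of the semigroup `S[X]` built from a semigroup `S` and a right
`S`-act `X`: the carrier is `S ⊕ X`, the multiplication extends that of `S` by
`s · x = x`, `x · s = x ⬝ s` (the act value) and `x · y = y`. -/
def actMul {S X : Type*} [Mul S] (act : X → S → X) : S ⊕ X → S ⊕ X → S ⊕ X
  | Sum.inl s, Sum.inl t => Sum.inl (s * t)
  | Sum.inl _, Sum.inr x => Sum.inr x
  | Sum.inr x, Sum.inl s => Sum.inr (act x s)
  | Sum.inr _, Sum.inr y => Sum.inr y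

/-- `actMul` is associative, so `S[X]` is indeed a semigroup. -/
def actSemigroup {S X : Type*} [Semigroup S] (act : X → S → X)
    (hact : ∀ (x : X) (s t : S), act x (s * t) = act (act x s) t) :
    Semigroup (S ⊕ X) where
  mul := actMul act
  mul_assoc u v w := by
    show actMul act (actMul act u v) w = actMul act u (actMul act v w)
    rcases u with s | x <;> rcases v with t | y <;> rcases w with r | z <;>
      simp [actMul, mul_assoc, hact]

open Function Set

namespace FreeSemigroup

variable {α β : Type*}

theorem of_injective : Injective (of : α → FreeSemigroup α) :=
  fun _ _ h => congrArg head h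

theorem mul_self_ne (s : FreeSemigroup α) : s * s ≠ s := by
  intro h
  have hlen := congrArg length h
  rw [length_mul] at hlen
  have hpos : 0 < s.length := Nat.succ_pos _
  omega

theorem of_ne_mul (a : α) (s t : FreeSemigroup α) : of a ≠ s * t := by
  intro h
  have hlen := congrArg length h
  rw [length_mul, length_of] at hlen
  have hs : 0 < s.length := Nat.succ_pos _
  have ht : 0 < t.length := Nat.succ_pos _
  omega

theorem map_leftInverse {f : α → β} {g : β → α} (h : LeftInverse g f) :
    LeftInverse (map g) (map f) := by
  intro s
  induction s using FreeSemigroup.recOnMul with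
  | ih1 a => simp [h a]
  | ih2 a s _ ih => simp [map_mul, h a, ih]

theorem map_bijective {f : α → β} (hf : Bijective f) : Bijective (map f) := by
  obtain ⟨g, hgf, hfg⟩ := bijective_iff_has_inverse.mp hf
  exact ⟨(map_leftInverse hgf).injective, (map_leftInverse hfg).surjective⟩

end FreeSemigroup

theorem range_inr_subset_image {S X : Type*} {φ : S ⊕ X → S ⊕ X} (hsurj : Surjective φ)
    (hF : ∀ s, ∃ t, φ (Sum.inl s) = Sum.inl t) :
    range Sum.inr ⊆ φ '' range Sum.inr := by
  rintro _ ⟨x, rfl⟩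
  obtain ⟨u | z, hu⟩ := hsurj (Sum.inr x)
  · obtain ⟨t, ht⟩ := hF u
    simp [ht] at hu
  · exact ⟨Sum.inr z, mem_range_self z, hu⟩

section ActMul

variable {S X : Type*} [Mul S] {act : X → S → X}

theorem actMul_eq_inl_iff {u v : S ⊕ X} {r : S} :
    actMul act u v = Sum.inl r ↔ ∃ s t, u = Sum.inl s ∧ v = Sum.inl t ∧ s * t = r := by
  rcases u with s | x <;> rcases v with t | y <;> simp [actMul]

variable {φ : S ⊕ X → S ⊕ X}

theorem mapsTo_range_inr_of_mul_self_ne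
    (hhom : ∀ u v, φ (actMul act u v) = actMul act (φ u) (φ v)) (hS : ∀ s : S, s * s ≠ s) :
    MapsTo φ (range Sum.inr) (range Sum.inr) := by
  rintro _ ⟨x, rfl⟩
  have hidem : φ (Sum.inr x) = actMul act (φ (Sum.inr x)) (φ (Sum.inr x)) :=
    hhom (Sum.inr x) (Sum.inr x)
  rcases hx : φ (Sum.inr x) with s | y
  · rw [hx, eq_comm, actMul_eq_inl_iff] at hidem
    obtain ⟨s₁, s₂, h₁, h₂, hs⟩ := hidem
    cases h₁; cases h₂
    exact absurd hs (hS s)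
  · exact mem_range_self y

end ActMul

section FreeSemigroupAct

open FreeSemigroup

variable {A X : Type*} {act : X → FreeSemigroup A → X}
  {φ : FreeSemigroup A ⊕ X → FreeSemigroup A ⊕ X}

theorem exists_apply_inl_of_eq_inl_of
    (hhom : ∀ u v, φ (actMul act u v) = actMul act (φ u) (φ v)) (hsurj : Surjective φ)
    (hX : MapsTo φ (range Sum.inr) (range Sum.inr)) (a : A) :
    ∃ b, φ (Sum.inl (of b)) = Sum.inl (of a) := by
  obtain ⟨s | x, hs⟩ := hsurj (Sum.inl (of a))
  · cases s using FreeSemigroup.recOnMul with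
    | ih1 b => exact ⟨b, hs⟩
    | ih2 c t =>
      have hmul : φ (Sum.inl (of c * t)) = actMul act (φ (Sum.inl (of c))) (φ (Sum.inl t)) :=
        hhom (Sum.inl (of c)) (Sum.inl t)
      rw [hs, eq_comm, actMul_eq_inl_iff] at hmul
      obtain ⟨s₁, s₂, -, -, hprod⟩ := hmul
      exact absurd hprod.symm (of_ne_mul a s₁ s₂)
  · obtain ⟨y, hy⟩ := hX (mem_range_self x)
    simp [hs] at hy

theorem exists_equiv_apply_inl_of [Finite A]
    (hhom : ∀ u v, φ (actMul act u v) = actMul act (φ u) (φ v)) (hsurj : Surjective φ)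
    (hX : MapsTo φ (range Sum.inr) (range Sum.inr)) :
    ∃ e : A ≃ A, ∀ b, φ (Sum.inl (of b)) = Sum.inl (of (e b)) := by
  choose k hk using exists_apply_inl_of_eq_inl_of hhom hsurj hX
  have hk_inj : Injective k := fun a a' h =>
    of_injective (Sum.inl_injective ((hk a).symm.trans (h ▸ hk a')))
  let e := Equiv.ofBijective k ⟨hk_inj, Finite.surjective_of_injective hk_inj⟩
  refine ⟨e.symm, fun b => ?_⟩
  have hb : k (e.symm b) = b := e.apply_symm_apply b
  rw [← hk (e.symm b), hb]

theorem apply_inl_eq_inl_map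
    (hhom : ∀ u v, φ (actMul act u v) = actMul act (φ u) (φ v)) {f : A → A}
    (hf : ∀ b, φ (Sum.inl (of b)) = Sum.inl (of (f b)))
    (s : FreeSemigroup A) : φ (Sum.inl s) = Sum.inl (map f s) := by
  induction s using FreeSemigroup.recOnMul with
  | ih1 b => exact hf b
  | ih2 c t hc ht =>
    have hmul : φ (Sum.inl (of c * t)) = actMul act (φ (Sum.inl (of c))) (φ (Sum.inl t)) :=
      hhom (Sum.inl (of c)) (Sum.inl t)
    rw [hmul, hc, ht, map_mul]
    rfl

end FreeSemigroupAct

theorem stmt_11_general {A : Type} [Finite A] (X : Type)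
    (act : X → FreeSemigroup A → X)
    (φ : FreeSemigroup A ⊕ X → FreeSemigroup A ⊕ X)
    (hhom : ∀ u v, φ (actMul act u v) = actMul act (φ u) (φ v))
    (hsurj : Function.Surjective φ) :
    (∃ σ : FreeSemigroup A → FreeSemigroup A,
      (∀ s, φ (Sum.inl s) = Sum.inl (σ s)) ∧
      (∀ s t, σ (s * t) = σ s * σ t) ∧ Function.Bijective σ) ∧
    φ '' (Set.range Sum.inr) = Set.range Sum.inr := by
  have hX := mapsTo_range_inr_of_mul_self_ne hhom FreeSemigroup.mul_self_ne
  obtain ⟨e, he⟩ := exists_equiv_apply_inl_of hhom hsurj hX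
  have hσ := apply_inl_eq_inl_map hhom he
  refine ⟨⟨FreeSemigroup.map e, hσ, map_mul _, FreeSemigroup.map_bijective e.bijective⟩,
    ?_⟩
  exact hX.image_subset.antisymm
    (range_inr_subset_image hsurj fun s => ⟨_, hσ s⟩)

/-- If `F` is a free semigroup of finite rank and `φ` is a surjective endomorphism of
`F[X]`, then `φ` restricts to an automorphism of `F` and maps `X` onto `X`. -/
theorem stmt_11 {A : Type} [Finite A] [Nonempty A] (X : Type)
    (act : X → FreeSemigroup A → X)
    (hact : ∀ (x : X) (s t : FreeSemigroup A), act x (s * t) = act (act x s) t)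
    (φ : FreeSemigroup A ⊕ X → FreeSemigroup A ⊕ X)
    (hhom : ∀ u v, φ (actMul act u v) = actMul act (φ u) (φ v))
    (hsurj : Function.Surjective φ) :
    (∃ σ : FreeSemigroup A → FreeSemigroup A,
      (∀ s, φ (Sum.inl s) = Sum.inl (σ s)) ∧
      (∀ s t, σ (s * t) = σ s * σ t) ∧ Function.Bijective σ) ∧
    φ '' (Set.range Sum.inr) = Set.range Sum.inr :=
  stmt_11_general X act φ hhom hsurj
end

section
/- Let F be a free semigroup on a finite nonempty alphabet, and let X be an F-act. Then the semigroup F[X] is hopfian if and only if X is a hopfian F-act. -/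
lemma free_of_or_mul {A : Type} (s : FreeSemigroup A) :
    (∃ a, s = FreeSemigroup.of a) ∨ ∃ u v, s = u * v := by
  induction s using FreeSemigroup.recOnMul with
  | ih1 a => exact Or.inl ⟨a, rfl⟩
  | ih2 a v _ _ => exact Or.inr ⟨FreeSemigroup.of a, v, rfl⟩

lemma free_length_pos {A : Type} (u : FreeSemigroup A) : 0 < u.length :=
  Nat.succ_pos _

lemma free_mul_ne_self {A : Type} (t u : FreeSemigroup A) : t * u ≠ t := by
  intro h
  have h2 := congrArg FreeSemigroup.length h
  rw [FreeSemigroup.length_mul] at h2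
  have := free_length_pos u
  omega

lemma free_map_id {A : Type} (s : FreeSemigroup A) :
    FreeSemigroup.map id s = s := by
  induction s using FreeSemigroup.recOnMul with
  | ih1 a => rfl
  | ih2 a v _ hv => rw [map_mul, hv]; rfl

lemma free_map_map {A : Type} (g f : A → A) (s : FreeSemigroup A) :
    FreeSemigroup.map g (FreeSemigroup.map f s) = FreeSemigroup.map (g ∘ f) s := by
  induction s using FreeSemigroup.recOnMul with
  | ih1 a => rfl
  | ih2 a v _ hv => rw [map_mul, map_mul, map_mul, hv]; rfl

/-- For a free semigroup `F` of finite rank and an `F`-act `X`, the semigroup `F[X]` is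
hopfian if and only if `X` is a hopfian `F`-act. -/
theorem stmt_13 {A : Type} [Finite A] [Nonempty A] (X : Type)
    (act : X → FreeSemigroup A → X)
    (hact : ∀ (x : X) (s t : FreeSemigroup A), act x (s * t) = act (act x s) t) :
    (∀ φ : FreeSemigroup A ⊕ X → FreeSemigroup A ⊕ X,
        (∀ u v, φ (actMul act u v) = actMul act (φ u) (φ v)) →
        Function.Surjective φ → Function.Injective φ) ↔
    (∀ ψ : X → X, (∀ (x : X) (s : FreeSemigroup A), ψ (act x s) = act (ψ x) s) →
        Function.Surjective ψ → Function.Injective ψ) := by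
  constructor
  · -- F[X] hopfian → X hopfian
    intro h ψ hψ hsurj
    set φ : FreeSemigroup A ⊕ X → FreeSemigroup A ⊕ X := Sum.map id ψ with hφdef
    have hhom : ∀ u v, φ (actMul act u v) = actMul act (φ u) (φ v) := by
      intro u v
      rcases u with s | x <;> rcases v with t | y <;> simp [actMul, hφdef, hψ]
    have hsurj' : Function.Surjective φ := by
      rintro (t | y)
      · exact ⟨Sum.inl t, rfl⟩
      · obtain ⟨x, hx⟩ := hsurj y
        exact ⟨Sum.inr x, by simp [hφdef, hx]⟩
    intro x y hxy
    have := h φ hhom hsurj' (show φ (Sum.inr x) = φ (Sum.inr y) by simp [hφdef, hxy])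
    exact Sum.inr.inj this
  · -- X hopfian → F[X] hopfian
    intro hX φ hφ hsurj
    -- Step A: φ maps X into X
    have hA : ∀ x : X, ∃ y, φ (Sum.inr x) = Sum.inr y := by
      intro x
      rcases h : φ (Sum.inr x) with t | y
      · exfalso
        have h2 := hφ (Sum.inr x) (Sum.inr x)
        rw [show actMul act (Sum.inr x) (Sum.inr x) = (Sum.inr x :
          FreeSemigroup A ⊕ X) from rfl, h] at h2
        exact free_mul_ne_self t t (Sum.inl.inj h2).symm
      · exact ⟨y, rfl⟩
    -- Step B: every generator is hit (within F)
    have hB : ∀ a : A, ∃ b : A, φ (Sum.inl (FreeSemigroup.of b))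
        = Sum.inl (FreeSemigroup.of a) := by
      intro a
      obtain ⟨u, hu⟩ := hsurj (Sum.inl (FreeSemigroup.of a))
      rcases u with s | x
      · rcases free_of_or_mul s with ⟨b, rfl⟩ | ⟨u, v, rfl⟩
        · exact ⟨b, hu⟩
        · exfalso
          have h2 := hφ (Sum.inl u) (Sum.inl v)
          rw [show actMul act (Sum.inl u) (Sum.inl v) = (Sum.inl (u * v) :
            FreeSemigroup A ⊕ X) from rfl, hu] at h2
          rcases hu1 : φ (Sum.inl u) with t1 | y1 <;>
            rcases hu2 : φ (Sum.inl v) with t2 | y2 <;>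
            rw [hu1, hu2] at h2 <;> simp [actMul] at h2
          have h3 := congrArg FreeSemigroup.length h2
          rw [FreeSemigroup.length_of, FreeSemigroup.length_mul] at h3
          have := free_length_pos t1
          have := free_length_pos t2
          omega
      · obtain ⟨y, hy⟩ := hA x
        rw [hu] at hy
        exact absurd hy (by simp)
    -- Step C: the induced permutation of the alphabet
    set h0 : A → A := fun a => Classical.choose (hB a) with hh0
    have hh0spec : ∀ a, φ (Sum.inl (FreeSemigroup.of (h0 a)))
        = Sum.inl (FreeSemigroup.of a) := fun a => Classical.choose_spec (hB a)
    have hh0inj : Function.Injective h0 := by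
      intro a a' haa'
      have := hh0spec a
      rw [haa', hh0spec a'] at this
      have h3 := Sum.inl.inj this
      simpa [FreeSemigroup.of, FreeSemigroup.mk.injEq] using h3.symm
    have hh0bij : Function.Bijective h0 := Finite.injective_iff_bijective.mp hh0inj
    set e : A ≃ A := Equiv.ofBijective h0 hh0bij with he
    set g : A → A := fun a => e.symm a with hg
    have hgen : ∀ b : A, φ (Sum.inl (FreeSemigroup.of b))
        = Sum.inl (FreeSemigroup.of (g b)) := by
      intro b
      have h1 := hh0spec (e.symm b)
      rw [show h0 (e.symm b) = b from e.apply_symm_apply b] at h1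
      exact h1
    -- Step D: φ on F is map g
    have hF : ∀ s : FreeSemigroup A, φ (Sum.inl s)
        = Sum.inl (FreeSemigroup.map g s) := by
      intro s
      induction s using FreeSemigroup.recOnMul with
      | ih1 a => rw [hgen a]; rfl
      | ih2 a v hv1 hv2 =>
        have h2 := hφ (Sum.inl (FreeSemigroup.of a)) (Sum.inl v)
        rw [show actMul act (Sum.inl (FreeSemigroup.of a)) (Sum.inl v)
          = (Sum.inl (FreeSemigroup.of a * v) : FreeSemigroup A ⊕ X) from rfl,
          hv1, hv2] at h2
        rw [h2, map_mul]
        rfl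
    -- Step E: φ on X
    set ψ : X → X := fun x => Classical.choose (hA x) with hψdef
    have hψ0 : ∀ x, φ (Sum.inr x) = Sum.inr (ψ x) := fun x =>
      Classical.choose_spec (hA x)
    have hψmul : ∀ x s, ψ (act x s) = act (ψ x) (FreeSemigroup.map g s) := by
      intro x s
      have h2 := hφ (Sum.inr x) (Sum.inl s)
      rw [show actMul act (Sum.inr x) (Sum.inl s) = (Sum.inr (act x s) :
        FreeSemigroup A ⊕ X) from rfl, hψ0, hF, hψ0] at h2
      exact Sum.inr.inj h2
    have hψsurj : Function.Surjective ψ := by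
      intro y
      obtain ⟨u, hu⟩ := hsurj (Sum.inr y)
      rcases u with s | x
      · rw [hF] at hu; exact absurd hu (by simp)
      · rw [hψ0] at hu; exact ⟨x, Sum.inr.inj hu⟩
    -- Step F: kill the twist using finiteness
    set n : ℕ := Nat.card (Equiv.Perm A) with hn
    have hnpos : 0 < n := Nat.card_pos
    have hepow : e.symm ^ n = 1 := pow_card_eq_one'
    have hmapiter : ∀ (m : ℕ) (s : FreeSemigroup A),
        (fun s => FreeSemigroup.map g s)^[m] s
          = FreeSemigroup.map (fun a => (e.symm ^ m) a) s := by
      intro m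
      induction m with
      | zero =>
        intro s
        simp only [Function.iterate_zero, id_eq, pow_zero]
        rw [show (fun a => (1 : Equiv.Perm A) a) = id from funext fun a => rfl,
          free_map_id]
      | succ m ih =>
        intro s
        rw [Function.iterate_succ_apply', ih, free_map_map,
          show (g ∘ fun a => (e.symm ^ m) a) = (fun a => (e.symm ^ (m + 1)) a)
            from funext fun a => by rw [pow_succ']; rfl]
    have hiter : ∀ (m : ℕ) (x : X) (s : FreeSemigroup A),
        ψ^[m] (act x s) = act (ψ^[m] x) ((fun s => FreeSemigroup.map g s)^[m] s) := by
      intro m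
      induction m with
      | zero => intro x s; rfl
      | succ m ih =>
        intro x s
        rw [Function.iterate_succ_apply', Function.iterate_succ_apply',
          Function.iterate_succ_apply', ih, hψmul]
    have hactend : ∀ (x : X) (s : FreeSemigroup A),
        ψ^[n] (act x s) = act (ψ^[n] x) s := by
      intro x s
      rw [hiter n x s, hmapiter n s, hepow,
        show (fun a => (1 : Equiv.Perm A) a) = id from funext fun a => rfl,
        free_map_id]
    have hinjn : Function.Injective ψ^[n] :=
      hX (ψ^[n]) hactend (Function.Surjective.iterate hψsurj n)
    have hψinj : Function.Injective ψ := by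
      intro x y hxy
      apply hinjn
      rw [show n = (n - 1) + 1 from (Nat.succ_pred_eq_of_pos hnpos).symm,
        Function.iterate_succ_apply, Function.iterate_succ_apply, hxy]
    -- map g is injective
    have hmapginj : Function.Injective (FreeSemigroup.map g) := by
      intro s t hst
      have h2 := congrArg (FreeSemigroup.map (e : A → A)) hst
      rw [free_map_map, free_map_map,
        show (e : A → A) ∘ g = id from funext fun a => e.apply_symm_apply a,
        free_map_id, free_map_id] at h2
      exact h2
    -- Step G: conclude injectivity of φ
    intro u v huv
    rcases u with s | x <;> rcases v with t | y
    · rw [hF, hF] at huv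
      exact congrArg Sum.inl (hmapginj (Sum.inl.inj huv))
    · rw [hF, hψ0] at huv; exact absurd huv (by simp)
    · rw [hF, hψ0] at huv; exact absurd huv (by simp)
    · rw [hψ0, hψ0] at huv
      exact congrArg Sum.inr (hψinj (Sum.inr.inj huv))
end

section
/- In the one-relation semigroup S presented by ⟨a, b | abab²ab = b⟩ (the quotient of the free semigroup on {a, b} by the congruence generated by the pair (abab²ab, b)), the images of the words ab²a²b² and b are distinct elements of S. -/
/-- The generator `a` of the free semigroup on the two-element alphabet. -/
def wa : FreeSemigroup (Fin 2) := FreeSemigroup.of 0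

/-- The generator `b` of the free semigroup on the two-element alphabet. -/
def wb : FreeSemigroup (Fin 2) := FreeSemigroup.of 1

/-- The smallest semigroup congruence on the free semigroup on `{a, b}` identifying the
words `abab²ab` and `b`; its quotient is the one-relation semigroup
`⟨a, b | abab²ab = b⟩`. -/
def rel : Con (FreeSemigroup (Fin 2)) :=
  conGen (fun x y => x = wa * wb * wa * wb * wb * wa * wb ∧ y = wb)

/-!
The relation gives `abab³ = abab² · abab²ab = b · ab²ab`, so `abab²ab → b`, `abab³ → bab²ab` are
rewriting rules valid in the semigroup. The semigroup acts on the left on the words avoiding both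
left sides, a letter acting by prepending it and reducing; the relation holds for this action
because `ab · ab² · ab · t` reduces to `b · t` by induction on `t`. On the empty word
`ab²a²b²` and `b` act as two different reduced words.
-/

namespace OneRelationSemigroup

/- Letters are encoded as `a = false`, `b = true`. -/
def IsReduced (w : List Bool) : Prop :=
  ¬ [false, true, false, true, true, false, true] <:+: w ∧
    ¬ [false, true, false, true, true, true] <:+: w

/-- The reduced form of `ab · s`, for `s` reduced. -/
def abCons : List Bool → List Bool
  | false :: true :: true :: false :: true :: t => true :: t
  | false :: true :: true :: true :: t => true :: false :: true :: true :: abCons t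
  | s => false :: true :: s

def aCons : List Bool → List Bool
  | true :: s => abCons s
  | w => false :: w

theorem isReduced_cons_iff {c : Bool} {w : List Bool} :
    IsReduced (c :: w) ↔ ¬ [false, true, false, true, true, false, true] <+: c :: w ∧
      ¬ [false, true, false, true, true, true] <+: c :: w ∧ IsReduced w := by
  simp only [IsReduced, List.infix_cons_iff]
  tauto

theorem isReduced_nil : IsReduced [] := by
  simp [IsReduced]

theorem IsReduced.of_cons {c : Bool} {w : List Bool} (h : IsReduced (c :: w)) : IsReduced w :=
  (isReduced_cons_iff.mp h).2.2

theorem IsReduced.true_cons {w : List Bool} (h : IsReduced w) : IsReduced (true :: w) := by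
  simp [isReduced_cons_iff, h]

theorem IsReduced.babb_cons {w : List Bool} (h : IsReduced w) :
    IsReduced (true :: false :: true :: true :: w) := by
  simp [isReduced_cons_iff, h]

theorem abCons_of_not_prefix {s : List Bool} (h₁ : ¬ [false, true, true, false, true] <+: s)
    (h₂ : ¬ [false, true, true, true] <+: s) : abCons s = false :: true :: s := by
  rw [abCons.eq_def]
  split
  · exact absurd ⟨_, rfl⟩ h₁
  · exact absurd ⟨_, rfl⟩ h₂
  · rfl

theorem IsReduced.abCons {s : List Bool} (h : IsReduced s) : IsReduced (abCons s) := by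
  fun_induction OneRelationSemigroup.abCons s with
  | case1 t => exact h.of_cons.of_cons.of_cons.of_cons.of_cons.true_cons
  | case2 t ih => exact (ih h.of_cons.of_cons.of_cons.of_cons).babb_cons
  | case3 s h₁ h₂ =>
    simp only [isReduced_cons_iff, List.cons_prefix_cons, h, true_and, Bool.false_eq_true,
      false_and, not_false_eq_true, and_true]
    exact ⟨fun ⟨t, ht⟩ => h₁ t ht.symm, fun ⟨t, ht⟩ => h₂ t ht.symm⟩

theorem IsReduced.aCons {w : List Bool} (h : IsReduced w) : IsReduced (aCons w) := by
  fun_cases OneRelationSemigroup.aCons w with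
  | case1 s => exact h.of_cons.abCons
  | case2 w hw =>
    refine isReduced_cons_iff.mpr ⟨?_, ?_, h⟩ <;>
      exact fun ⟨t, ht⟩ => hw _ (List.cons_injective ht).symm

theorem abCons_abb_abCons {t : List Bool} (h : IsReduced t) :
    abCons (false :: true :: true :: abCons t) = true :: t := by
  fun_induction OneRelationSemigroup.abCons t with
  | case1 u =>
    show true :: false :: true :: true :: abCons u = _
    rw [abCons_of_not_prefix (fun ⟨v, hv⟩ => h.1 ⟨[false, true, true], v, by simp [← hv]⟩)
      (fun ⟨v, hv⟩ => h.2 ⟨[false, true, true], v, by simp [← hv]⟩)]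
  | case2 u ih =>
    show true :: false :: true :: true :: abCons (false :: true :: true :: abCons u) = _
    rw [ih h.of_cons.of_cons.of_cons.of_cons]
  | case3 s h₁ h₂ => rfl

def ReducedWord : Type := {w : List Bool // IsReduced w}

def letterAction : Fin 2 → Function.End ReducedWord
  | 0 => fun w => ⟨aCons w.1, w.2.aCons⟩
  | 1 => fun w => ⟨true :: w.1, w.2.true_cons⟩

def leftAction : FreeSemigroup (Fin 2) →ₙ* Function.End ReducedWord :=
  FreeSemigroup.lift letterAction

theorem rel_le_ker_leftAction : rel ≤ Con.ker leftAction := by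
  refine Con.conGen_le.mpr ?_
  rintro _ _ ⟨rfl, rfl⟩
  funext w
  -- `abab²ab` acts on `w` as `abCons (abb · abCons w)`, by unfolding.
  exact Subtype.ext (abCons_abb_abCons w.2)

end OneRelationSemigroup

/-- In the one-relation semigroup `⟨a, b | abab²ab = b⟩` the images of the words
`ab²a²b²` and `b` are distinct. -/
theorem stmt_17 :
    (↑(wa * wb * wb * wa * wa * wb * wb) : rel.Quotient) ≠ ↑wb := by
  intro h
  have hempty := congrArg (fun f : Function.End OneRelationSemigroup.ReducedWord =>
      (f ⟨[], OneRelationSemigroup.isReduced_nil⟩).1)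
    (OneRelationSemigroup.rel_le_ker_leftAction ((Con.eq rel).mp h))
  exact absurd hempty (by decide)
end
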